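/- arXiv:math/0304054 — 3 statements merged into one kernel-verified Lean document; each statement's English description precedes it below -/
import Mathlib

section
/- Suppose X = (X, 𝓑, μ, T) is an ergodic p-endomorphism and B ⊆ X is measurable. Given ε > 0, there exists N ∈ ℕ such that for all n ≥ N there is a set G of measure > 1−ε such that for each x ∈ G, |(1/n)·∑_{0<|v|≤n} w_v·χ_B(T_v x) − μ(B)| < ε, where the sum runs over all nonempty nodes v of length ≤ n of the p-tree. -/
open MeasureTheory Filter
open scoped ENNReal symmDiff Classical

noncomputable section

/-- A probability vector: positive components summing to `1`. -/
def IsProbVec {s : ℕ} (p : Fin s → ℝ) : Prop :=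
  (∀ j, 0 < p j) ∧ ∑ j, p j = 1

/-- The entropy `h(p) = ∑ⱼ -pⱼ log pⱼ` of a probability vector. -/
def vecEntropy {s : ℕ} (p : Fin s → ℝ) : ℝ := ∑ j, Real.negMulLog (p j)

/-- Nodes of the `p`-tree are finite sequences from `{1,…,s}`; the weight of a node
`v = (a₁,…,aⱼ)` is `w_v = ∏ᵢ p_{aᵢ}`. -/
def nodeWeight {s : ℕ} (p : Fin s → ℝ) (v : List (Fin s)) : ℝ := (v.map p).prod

/-- A (structure- and weight-preserving) automorphism of the `p`-tree.  Here `σ = List.tail`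
deletes the leftmost symbol of a node. -/
structure TreeAut {s : ℕ} (p : Fin s → ℝ) where
  toFun : List (Fin s) → List (Fin s)
  bijective : Function.Bijective toFun
  length_eq : ∀ v, (toFun v).length = v.length
  tail_comm : ∀ v : List (Fin s), v ≠ [] → toFun v.tail = (toFun v).tail
  weight_eq : ∀ v, nodeWeight p (toFun v) = nodeWeight p v

/-- The `t̄_n` distance between two tree names:
`t̄_n(τ,τ') = (1/n) inf_A ∑_{0<|v|≤n} d(τ(v), τ'(Av)) w_v`. -/
def tbar {s : ℕ} (p : Fin s → ℝ) {R : Type*} [PseudoMetricSpace R]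
    (n : ℕ) (τ τ' : List (Fin s) → R) : ℝ :=
  ⨅ A : TreeAut p, (1 / (n : ℝ)) *
    ∑ m ∈ Finset.range n, ∑ a : Fin (m + 1) → Fin s,
      dist (τ (List.ofFn a)) (τ' (A.toFun (List.ofFn a))) * nodeWeight p (List.ofFn a)

/-- A tree partition together with its partial inverses, witnessing that `T` is `s`-to-1 a.e.
with the conditional probabilities of the `s` preimages of a.e. point given by the
components of `p`: the preimage `inv j x` of `x` carries conditional probability `p j`,
which is expressed by the disintegration `μ = ∑ⱼ pⱼ • (inv j)_* μ`. -/
structure TreeSystem {s : ℕ} (p : Fin s → ℝ) {X : Type*} [MeasurableSpace X]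
    (μ : Measure X) (T : X → X) where
  inv : Fin s → X → X
  measurable_inv : ∀ j, Measurable (inv j)
  left_inv : ∀ j, ∀ᵐ x ∂μ, T (inv j x) = x
  inv_ne : ∀ j k, j ≠ k → ∀ᵐ x ∂μ, inv j x ≠ inv k x
  surj : ∀ᵐ y ∂μ, ∃ j, inv j (T y) = y
  decomp : μ = ∑ j, ENNReal.ofReal (p j) • Measure.map (inv j) μ

/-- The partial inverse `T_v` along a node `v = (a₁,…,aₙ)`:
`T_v x = T_{a₁}(T_{a₂}(⋯ T_{aₙ} x))`. -/
def TreeSystem.invNode {s : ℕ} {p : Fin s → ℝ} {X : Type*} [MeasurableSpace X]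
    {μ : Measure X} {T : X → X} (K : TreeSystem p μ T)
    (v : List (Fin s)) (x : X) : X :=
  v.foldr (fun a y => K.inv a y) x

/-- The `g`-tree name of `x`: `τ^g_x(v) = g (T_v x)`. -/
def TreeSystem.treeName {s : ℕ} {p : Fin s → ℝ} {X : Type*} [MeasurableSpace X]
    {μ : Measure X} {T : X → X} (K : TreeSystem p μ T) {R : Type*}
    (g : X → R) (x : X) : List (Fin s) → R :=
  fun v => g (K.invNode v x)

/-- `(X, g)` is tree very weak Bernoulli. -/
def TvwBFor {s : ℕ} {p : Fin s → ℝ} {X : Type*} [MeasurableSpace X]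
    {μ : Measure X} {T : X → X} (K : TreeSystem p μ T)
    {R : Type*} [PseudoMetricSpace R] (g : X → R) : Prop :=
  ∀ ε : ℝ, 0 < ε → ∃ N : ℕ, ∀ n, N ≤ n → ∃ G : Set X, MeasurableSet G ∧
    ENNReal.ofReal (1 - ε) ≤ μ G ∧
    ∀ x ∈ G, ∀ y ∈ G, tbar p n (K.treeName g x) (K.treeName g y) < ε

/-- `X` is tree very weak Bernoulli: `(X, g)` is tvwB for every measurable function `g`
into a compact metric space (for any choice of tree partition; the condition does not
depend on this choice). -/
def TvwB {s : ℕ} (p : Fin s → ℝ) {X : Type*} [MeasurableSpace X]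
    (μ : Measure X) (T : X → X) : Prop :=
  ∀ K : TreeSystem p μ T,
    ∀ (R : Type) [MetricSpace R] [CompactSpace R] [MeasurableSpace R] [BorelSpace R]
      (g : X → R), Measurable g → TvwBFor K g

/-- Shannon entropy (natural log) of a finite partition `P`. -/
def partitionEntropy {X : Type*} [MeasurableSpace X] (μ : Measure X)
    {C : Type*} [Fintype C] (P : X → C) : ℝ :=
  ∑ c : C, Real.negMulLog ((μ (P ⁻¹' {c})).toReal)

/-- Kolmogorov–Sinai entropy of `(X, μ, T)`:
`sup_P lim (1/n) H(⋁_{i<n} T⁻ⁱ P)` over finite measurable partitions `P`. -/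
def ksEntropy {X : Type*} [MeasurableSpace X] (μ : Measure X) (T : X → X) : ℝ≥0∞ :=
  ⨆ (k : ℕ) (P : {P : X → Fin k // Measurable P}),
    ENNReal.ofReal (Filter.atTop.liminf fun n : ℕ =>
      partitionEntropy μ (fun x => fun i : Fin n => P.1 (T^[(i : ℕ)] x)) / n)

/-- `(X, 𝓑, μ, T)` is a `p`-endomorphism: `T` is a measure-preserving endomorphism which is
`s`-to-1 a.e. with preimage conditional probabilities the components of `p` (witnessed by a
tree partition with partial inverses), and the entropy of the system is `h(p)`. -/
def IsPEndo {s : ℕ} (p : Fin s → ℝ) {X : Type*} [MeasurableSpace X]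
    (μ : Measure X) (T : X → X) : Prop :=
  Measurable T ∧ MeasurePreserving T μ μ ∧ Nonempty (TreeSystem p μ T) ∧
    ksEntropy μ T = ENNReal.ofReal (vecEntropy p)

/-- The one-sided shift. -/
def shiftMap {α : Type*} : (ℕ → α) → ℕ → α := fun x n => x (n + 1)

lemma measurable_shiftMap {α : Type*} [MeasurableSpace α] :
    Measurable (shiftMap (α := α)) :=
  measurable_pi_lambda _ fun n => measurable_pi_apply (n + 1)

/-- `ν` is the Bernoulli product measure on `{1,…,s}ᴺ` giving symbol `j` weight `p j`. -/
def IsBernoulli {s : ℕ} (p : Fin s → ℝ) (ν : Measure (ℕ → Fin s)) : Prop :=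
  ∀ (n : ℕ) (a : Fin n → Fin s),
    ν {x | ∀ i : Fin n, x (i : ℕ) = a i} = ∏ i, ENNReal.ofReal (p (a i))

/-- `φ` realizes a (measure-theoretic) isomorphism from `(X, μ, T)` to `(Y, ν, S)`:
after deleting null sets `X₀, Y₀`, `φ` is a measure-preserving bijection
intertwining the transformations. -/
def IsIsoMod0Via {X Y : Type*} [MeasurableSpace X] [MeasurableSpace Y]
    (μ : Measure X) (T : X → X) (ν : Measure Y) (S : Y → Y) (φ : X → Y) : Prop :=
  Measurable φ ∧ Measure.map φ μ = ν ∧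
  ∃ (X₀ : Set X) (Y₀ : Set Y), MeasurableSet X₀ ∧ MeasurableSet Y₀ ∧
    μ X₀ = 0 ∧ ν Y₀ = 0 ∧ Set.BijOn φ X₀ᶜ Y₀ᶜ ∧
    ∀ x ∈ (X₀ᶜ : Set X), φ (T x) = S (φ x)

/-- `(X, μ, T)` and `(Y, ν, S)` are isomorphic measure-preserving systems. -/
def IsIsoMod0 {X Y : Type*} [MeasurableSpace X] [MeasurableSpace Y]
    (μ : Measure X) (T : X → X) (ν : Measure Y) (S : Y → Y) : Prop :=
  ∃ φ : X → Y, IsIsoMod0Via μ T ν S φ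

/-- The `p`-function `p_X` of a `p`-endomorphism: `p_X x` is the conditional probability of
the preimage `x` of `T x`, i.e. `p j` for the (a.e.-unique) `j` with `inv j (T x) = x`. -/
def pFun {s : ℕ} (p : Fin s → ℝ) {X : Type*} [MeasurableSpace X]
    {μ : Measure X} {T : X → X} (K : TreeSystem p μ T) (x : X) : ℝ :=
  ∑ j, if K.inv j (T x) = x then p j else 0

/-- `φ : X → Y` is a tree-adapted factor map: a factor map which, for a.e. `x`, maps the
`T`-preimages of `x` bijectively onto the `S`-preimages of `φ x`. -/
def IsTreeAdaptedFactor {X Y : Type*} [MeasurableSpace X] [MeasurableSpace Y]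
    (μ : Measure X) (T : X → X) (ν : Measure Y) (S : Y → Y) (φ : X → Y) : Prop :=
  Measurable φ ∧ Measure.map φ μ = ν ∧ (∀ᵐ x ∂μ, φ (T x) = S (φ x)) ∧
  (∀ᵐ x ∂μ, Set.BijOn φ (T ⁻¹' {x}) (S ⁻¹' {φ x}))

/-- `f` is a generating function for `(X, μ, T)`: `𝓑 = ⋁ᵢ T⁻ⁱ f⁻¹(𝓓)` modulo `μ`-null sets. -/
def Generating {X R : Type*} [MeasurableSpace X] [MeasurableSpace R]
    (μ : Measure X) (T : X → X) (f : X → R) : Prop :=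
  ∀ A : Set X, MeasurableSet A → ∃ A' : Set X,
    MeasurableSet[⨆ i : ℕ, MeasurableSpace.comap (fun x => f (T^[i] x)) inferInstance] A' ∧
    μ (A ∆ A') = 0

/-- A function is tree-adapted if for a.e. `x` it assigns distinct values to the
preimages of `x`. -/
def TreeAdaptedFn {X R : Type*} [MeasurableSpace X] (μ : Measure X) (T : X → X)
    (f : X → R) : Prop :=
  ∀ᵐ x ∂μ, Set.InjOn f (T ⁻¹' {x})

/-- The discretization `g_N`: the midpoint of the dyadic interval of length `2⁻ᴺ`
containing `r`. -/
def dyadicMid (N : ℕ) (r : ℝ) : ℝ :=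
  (2 * (⌊(2 ^ N : ℝ) * r⌋ : ℝ) + 1) / 2 ^ (N + 1)

/-- (Indices of) the nonempty nodes of the `p`-tree of length `≤ N`. -/
def NodeIdx (s N : ℕ) : Type := Σ m : Fin N, Fin (m + 1) → Fin s

/-- The node corresponding to a node index. -/
def NodeIdx.toList {s N : ℕ} (v : NodeIdx s N) : List (Fin s) := List.ofFn v.2

/-- The `g`-`N`-tree name of `x`, as a function on the nonempty nodes of length `≤ N`. -/
def levelName {s : ℕ} {p : Fin s → ℝ} {X : Type*} [MeasurableSpace X]
    {μ : Measure X} {T : X → X} (K : TreeSystem p μ T) {R : Type*} (g : X → R)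
    (N : ℕ) (x : X) : NodeIdx s N → R :=
  fun v => g (K.invNode v.toList x)

/-- Two `N`-tree names are the same up to tree automorphism. -/
def NameRel {s : ℕ} (p : Fin s → ℝ) (N : ℕ) {R : Type*}
    (τ τ' : NodeIdx s N → R) : Prop :=
  ∃ A : TreeAut p, ∀ v w : NodeIdx s N, w.toList = A.toFun v.toList → τ v = τ' w

/-- Total variation distance between the distributions of the (`N`-level, mod tree
automorphism) tree names of the two processes. -/
def nameDistTV {s : ℕ} (p : Fin s → ℝ) (N : ℕ) {R : Type*}
    {X Y : Type*} [MeasurableSpace X] [MeasurableSpace Y]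
    (μ : Measure X) (ν : Measure Y)
    (F : X → NodeIdx s N → R) (G : Y → NodeIdx s N → R) : ℝ :=
  ∑ᶠ q : Quot (NameRel p N (R := R)),
    |(μ {x | Quot.mk (NameRel p N) (F x) = q}).toReal -
     (ν {y | Quot.mk (NameRel p N) (G y) = q}).toReal|


/-! ### Auxiliary material for `tree_birkhoff_for_sets` -/

section TreeBirkhoffAux

variable {s : ℕ} {p : Fin s → ℝ} {X : Type} [MeasurableSpace X]
  {μ : Measure X} {T : X → X} (K : TreeSystem p μ T)

lemma measurable_invNode (l : List (Fin s)) : Measurable (K.invNode l) := by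
  induction l with
  | nil => exact measurable_id
  | cons a l ih => exact (K.measurable_inv a).comp ih

lemma invNode_append_singleton (l : List (Fin s)) (j : Fin s) (x : X) :
    K.invNode (l ++ [j]) x = K.invNode l (K.inv j x) := by
  simp [TreeSystem.invNode, List.foldr_append]

/-- Level-`k` tree sum of the indicator of `B`. -/
def treeLevelSum (B : Set X) (k : ℕ) (x : X) : ℝ :=
  ∑ a : Fin k → Fin s, if K.invNode (List.ofFn a) x ∈ B then nodeWeight p (List.ofFn a) else 0

lemma nodeWeight_append (l : List (Fin s)) (j : Fin s) :
    nodeWeight p (l ++ [j]) = nodeWeight p l * p j := by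
  simp [nodeWeight]

lemma treeLevelSum_zero (B : Set X) (x : X) :
    treeLevelSum K B 0 x = Set.indicator B 1 x := by
  rw [treeLevelSum, Fintype.sum_unique]
  simp [TreeSystem.invNode, nodeWeight, Set.indicator_apply]

lemma sum_snoc_pi {M : Type*} [AddCommMonoid M] (k : ℕ) (g : (Fin (k+1) → Fin s) → M) :
    ∑ a : Fin (k+1) → Fin s, g a
      = ∑ j : Fin s, ∑ b : Fin k → Fin s, g (Fin.snoc b j) := by
  rw [← Equiv.sum_comp (Fin.snocEquiv (fun _ => Fin s)) g, Fintype.sum_prod_type]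
  rfl

lemma ofFn_snoc (k : ℕ) (b : Fin k → Fin s) (j : Fin s) :
    List.ofFn (Fin.snoc b j : Fin (k+1) → Fin s) = List.ofFn b ++ [j] := by
  rw [List.ofFn_succ']
  simp [List.concat_eq_append]

lemma treeLevelSum_succ (B : Set X) (k : ℕ) (x : X) :
    treeLevelSum K B (k+1) x = ∑ j, p j * treeLevelSum K B k (K.inv j x) := by
  rw [treeLevelSum, sum_snoc_pi]
  refine Finset.sum_congr rfl fun j _ => ?_
  rw [treeLevelSum, Finset.mul_sum]
  refine Finset.sum_congr rfl fun b _ => ?_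
  rw [ofFn_snoc, invNode_append_singleton, nodeWeight_append]
  by_cases h : K.invNode (List.ofFn b) (K.inv j x) ∈ B <;> simp [h, mul_comm]

lemma nodeWeight_nonneg (hp : ∀ j, 0 < p j) (l : List (Fin s)) : 0 ≤ nodeWeight p l := by
  induction l with
  | nil => simp [nodeWeight]
  | cons a l ih => simpa [nodeWeight] using mul_nonneg (hp a).le (by simpa [nodeWeight] using ih)

lemma sum_nodeWeight (hp : (∀ j, 0 < p j) ∧ ∑ j, p j = 1) (k : ℕ) :
    ∑ a : Fin k → Fin s, nodeWeight p (List.ofFn a) = 1 := by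
  induction k with
  | zero => rw [Fintype.sum_unique]; simp [nodeWeight]
  | succ k ih =>
      rw [sum_snoc_pi]
      have : ∀ j : Fin s, ∑ b : Fin k → Fin s, nodeWeight p (List.ofFn (Fin.snoc b j)) = p j := by
        intro j
        calc ∑ b : Fin k → Fin s, nodeWeight p (List.ofFn (Fin.snoc b j))
            = ∑ b : Fin k → Fin s, nodeWeight p (List.ofFn b) * p j := by
              refine Finset.sum_congr rfl fun b _ => ?_
              rw [ofFn_snoc, nodeWeight_append]
          _ = p j := by rw [← Finset.sum_mul, ih, one_mul]
      rw [Finset.sum_congr rfl fun j _ => this j, hp.2]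

lemma treeLevelSum_nonneg (hp : ∀ j, 0 < p j) (B : Set X) (k : ℕ) (x : X) :
    0 ≤ treeLevelSum K B k x := by
  refine Finset.sum_nonneg fun a _ => ?_
  split <;> simp [nodeWeight_nonneg hp]

lemma treeLevelSum_le_one (hp : (∀ j, 0 < p j) ∧ ∑ j, p j = 1) (B : Set X) (k : ℕ) (x : X) :
    treeLevelSum K B k x ≤ 1 := by
  rw [← sum_nodeWeight hp k]
  refine Finset.sum_le_sum fun a _ => ?_
  split <;> simp [nodeWeight_nonneg hp.1]

lemma measurable_treeLevelSum {B : Set X} (hB : MeasurableSet B) (k : ℕ) :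
    Measurable (treeLevelSum K B k) := by
  refine Finset.measurable_sum _ fun a _ => ?_
  exact Measurable.ite ((measurable_invNode K _) hB) measurable_const measurable_const

end TreeBirkhoffAux

/-- The Koopman operator on `L²`. -/
def koopmanCLM {X : Type} [MeasurableSpace X] {μ : Measure X} {T : X → X}
    (hT : MeasurePreserving T μ μ) : Lp ℝ 2 μ →L[ℝ] Lp ℝ 2 μ :=
  LinearMap.mkContinuous
    { toFun := fun g => Lp.compMeasurePreserving T hT g
      map_add' := fun g h => by simp
      map_smul' := fun c g => by
        refine Lp.ext ?_
        filter_upwards [Lp.coeFn_compMeasurePreserving (c • g) hT,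
          Lp.coeFn_smul c (Lp.compMeasurePreserving T hT g),
          hT.quasiMeasurePreserving.ae_eq_comp (Lp.coeFn_smul c g),
          Lp.coeFn_compMeasurePreserving g hT] with x h1 h2 h3 h4
        simp only [RingHom.id_apply]
        rw [h1, h2]
        simp only [Function.comp_apply, Pi.smul_apply, smul_eq_mul] at h3 h4 ⊢
        rw [h3, h4] }
    1 (fun g => by simp)

lemma koopmanCLM_norm_le {X : Type} [MeasurableSpace X] {μ : Measure X} {T : X → X}
    (hT : MeasurePreserving T μ μ) : ‖koopmanCLM hT‖ ≤ 1 :=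
  LinearMap.mkContinuous_norm_le _ zero_le_one _

lemma koopmanCLM_coeFn {X : Type} [MeasurableSpace X] {μ : Measure X} {T : X → X}
    (hT : MeasurePreserving T μ μ) (g : Lp ℝ 2 μ) :
    ⇑(koopmanCLM hT g) =ᵐ[μ] fun x => g (T x) :=
  Lp.coeFn_compMeasurePreserving g hT

lemma koopmanCLM_norm_apply {X : Type} [MeasurableSpace X] {μ : Measure X} {T : X → X}
    (hT : MeasurePreserving T μ μ) (g : Lp ℝ 2 μ) :
    ‖koopmanCLM hT g‖ = ‖g‖ :=
  Lp.norm_compMeasurePreserving g hT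

lemma adjoint_koopman_apply
    {X : Type} [MeasurableSpace X] {μ : Measure X} [IsProbabilityMeasure μ] {T : X → X}
    {s : ℕ} {p : Fin s → ℝ}
    (hpp : ∀ j, 0 < p j)
    (hinv : Fin s → X → X)
    (hinvm : ∀ j, Measurable (hinv j))
    (hli : ∀ j, ∀ᵐ x ∂μ, T (hinv j x) = x)
    (hdec : μ = ∑ j, ENNReal.ofReal (p j) • Measure.map (hinv j) μ)
    (hT : MeasurePreserving T μ μ)
    (u : X → ℝ) (hu : Measurable u) (hb : ∀ x, |u x| ≤ 1)
    (hmem : MemLp u 2 μ)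
    (hmemQ : MemLp (fun x => ∑ j, p j * u (hinv j x)) 2 μ) :
    ContinuousLinearMap.adjoint (koopmanCLM hT) (hmem.toLp u) = hmemQ.toLp _ := by
  have hle : ∀ j : Fin s, ENNReal.ofReal (p j) • Measure.map (hinv j) μ ≤ μ := by
    intro j
    refine Measure.le_iff.2 fun t ht => ?_
    conv_rhs => rw [hdec]
    rw [Measure.finset_sum_apply]
    exact Finset.single_le_sum (f := fun i => (ENNReal.ofReal (p i) • Measure.map (hinv i) μ) t)
      (fun i _ => zero_le) (Finset.mem_univ j)
  apply ext_inner_right ℝ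
  intro h
  rw [ContinuousLinearMap.adjoint_inner_left, L2.inner_def, L2.inner_def]
  simp only [RCLike.inner_apply, starRingEnd_apply, star_trivial]
  have hh1 : Integrable (⇑h) μ :=
    ((Lp.memLp h).mono_exponent (by norm_num)).integrable le_rfl
  set F : X → ℝ := fun y => u y * (↑↑h : X → ℝ) (T y) with hF
  have hhT : Integrable (fun y => (↑↑h : X → ℝ) (T y)) μ := by
    have := ((Lp.memLp h).comp_measurePreserving hT).mono_exponent
      (p := 1) (by norm_num) |>.integrable le_rfl
    exact this
  have hFsm : StronglyMeasurable F :=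
    hu.stronglyMeasurable.mul ((Lp.stronglyMeasurable h).comp_measurable hT.measurable)
  have hFint : Integrable F μ := by
    refine hhT.norm.mono' hFsm.aestronglyMeasurable (Filter.Eventually.of_forall fun y => ?_)
    calc ‖F y‖ = |u y| * ‖(↑↑h : X → ℝ) (T y)‖ := by simp [hF, abs_mul]
      _ ≤ 1 * ‖(↑↑h : X → ℝ) (T y)‖ := mul_le_mul_of_nonneg_right (hb y) (norm_nonneg _)
      _ = ‖(↑↑h : X → ℝ) (T y)‖ := one_mul _
  have hrhs : ∫ a, (↑↑(hmem.toLp u) : X → ℝ) a * (↑↑(koopmanCLM hT h) : X → ℝ) a ∂μ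
      = ∫ a, F a ∂μ := by
    refine integral_congr_ae ?_
    filter_upwards [hmem.coeFn_toLp, koopmanCLM_coeFn hT h] with a h1 h2
    rw [h1, h2]
  have hint_uh : ∀ j : Fin s, Integrable (fun a => u (hinv j a) * (↑↑h : X → ℝ) a) μ := by
    intro j
    refine hh1.norm.mono' ((hu.comp (hinvm j)).stronglyMeasurable.mul
      (Lp.stronglyMeasurable h)).aestronglyMeasurable (Filter.Eventually.of_forall fun a => ?_)
    calc ‖u (hinv j a) * (↑↑h : X → ℝ) a‖ = |u (hinv j a)| * ‖(↑↑h : X → ℝ) a‖ := by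
          simp [abs_mul]
      _ ≤ 1 * ‖(↑↑h : X → ℝ) a‖ := mul_le_mul_of_nonneg_right (hb _) (norm_nonneg _)
      _ = ‖(↑↑h : X → ℝ) a‖ := one_mul _
  have hlhs : ∫ a, (↑↑(hmemQ.toLp _) : X → ℝ) a * (↑↑h : X → ℝ) a ∂μ
      = ∑ j, p j * ∫ a, F a ∂(Measure.map (hinv j) μ) := by
    have step1 : ∫ a, (↑↑(hmemQ.toLp _) : X → ℝ) a * (↑↑h : X → ℝ) a ∂μ
        = ∫ a, ∑ j, p j * (u (hinv j a) * (↑↑h : X → ℝ) a) ∂μ := by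
      refine integral_congr_ae ?_
      filter_upwards [hmemQ.coeFn_toLp] with a h1
      rw [h1, Finset.sum_mul]
      exact Finset.sum_congr rfl fun j _ => by ring
    rw [step1, integral_finset_sum _ (fun j _ => (hint_uh j).const_mul _)]
    refine Finset.sum_congr rfl fun j _ => ?_
    rw [integral_const_mul]
    congr 1
    have step2 : ∫ a, u (hinv j a) * (↑↑h : X → ℝ) a ∂μ = ∫ a, F (hinv j a) ∂μ := by
      refine integral_congr_ae ?_
      filter_upwards [hli j] with a ha
      simp only [hF]
      rw [ha]
    rw [step2, ← integral_map (hinvm j).aemeasurable hFsm.aestronglyMeasurable]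
  have hdecint : ∫ a, F a ∂μ = ∑ j, p j * ∫ a, F a ∂(Measure.map (hinv j) μ) := by
    conv_lhs => rw [hdec]
    rw [integral_finset_sum_measure (fun j _ => hFint.mono_measure (hle j))]
    refine Finset.sum_congr rfl fun j _ => ?_
    rw [integral_smul_measure, ENNReal.toReal_ofReal (hpp j).le, smul_eq_mul]
  rw [show (∫ a, (↑↑(koopmanCLM hT h) : X → ℝ) a * (↑↑(hmem.toLp u) : X → ℝ) a ∂μ)
      = ∫ a, (↑↑(hmem.toLp u) : X → ℝ) a * (↑↑(koopmanCLM hT h) : X → ℝ) a ∂μ from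
      integral_congr_ae (Filter.Eventually.of_forall fun a => mul_comm _ _),
    show (∫ a, (↑↑h : X → ℝ) a * (↑↑(hmemQ.toLp _) : X → ℝ) a ∂μ)
      = ∫ a, (↑↑(hmemQ.toLp _) : X → ℝ) a * (↑↑h : X → ℝ) a ∂μ from
      integral_congr_ae (Filter.Eventually.of_forall fun a => mul_comm _ _)]
  rw [hlhs, hrhs, hdecint]

lemma Lp_coeFn_finsetSum {X : Type} [MeasurableSpace X] {μ : Measure X}
    {ι : Type*} (t : Finset ι) (f : ι → Lp ℝ 2 μ) :
    ⇑(∑ i ∈ t, f i) =ᵐ[μ] fun x => ∑ i ∈ t, f i x := by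
  classical
  induction t using Finset.induction with
  | empty => simp only [Finset.sum_empty]; exact Lp.coeFn_zero ℝ 2 μ
  | insert a t hnot ih =>
      rw [Finset.sum_insert hnot]
      filter_upwards [Lp.coeFn_add (f a) (∑ i ∈ t, f i), ih] with x h1 h2
      rw [h1]
      simp only [Pi.add_apply, h2, Finset.sum_insert hnot]

/-- **Proposition 2.2.2.** Suppose `X = (X,𝓑,μ,T)` is an ergodic `p`-endomorphism and
`B ⊆ X` is measurable.  Given `ε > 0`, there exists `N` such that for all `n ≥ N` there is a
set `G` of measure `> 1 − ε` such that for each `x ∈ G`,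
`|(1/n) ∑_{0<|v|≤n} w_v χ_B(T_v x) − μ(B)| < ε`. -/
theorem tree_birkhoff_for_sets
    {s : ℕ} (p : Fin s → ℝ) (hp : IsProbVec p)
    {X : Type} [MeasurableSpace X] [StandardBorelSpace X]
    (μ : Measure X) [IsProbabilityMeasure μ] [NullSingletonClass μ]
    (T : X → X) (hX : IsPEndo p μ T) (hErg : Ergodic T μ)
    (K : TreeSystem p μ T)
    (B : Set X) (hB : MeasurableSet B)
    (ε : ℝ) (hε : 0 < ε) :
    ∃ N : ℕ, ∀ n, N ≤ n → ∃ G : Set X, MeasurableSet G ∧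
      ENNReal.ofReal (1 - ε) < μ G ∧
      ∀ x ∈ G,
        |(1 / (n : ℝ)) * (∑ m ∈ Finset.range n, ∑ a : Fin (m + 1) → Fin s,
            if K.invNode (List.ofFn a) x ∈ B then nodeWeight p (List.ofFn a) else 0)
          - (μ B).toReal| < ε := by
  obtain ⟨hTmeas, hTmp, -, -⟩ := hX
  have hp1 := hp.1
  set ts : ℕ → X → ℝ := treeLevelSum K B with hts
  have hts_meas : ∀ k, Measurable (ts k) := fun k => measurable_treeLevelSum K hB k
  have hts_bd : ∀ k x, |ts k x| ≤ 1 := by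
    intro k x
    rw [abs_le]
    exact ⟨by linarith [treeLevelSum_nonneg K hp1 B k x],
      treeLevelSum_le_one K hp B k x⟩
  have hmemk : ∀ k, MemLp (ts k) 2 μ := fun k =>
    MemLp.of_bound (hts_meas k).aestronglyMeasurable 1
      (Filter.Eventually.of_forall fun x => by simpa [Real.norm_eq_abs] using hts_bd k x)
  set U : Lp ℝ 2 μ →L[ℝ] Lp ℝ 2 μ := koopmanCLM hTmp with hU
  set P : Lp ℝ 2 μ →L[ℝ] Lp ℝ 2 μ := ContinuousLinearMap.adjoint U with hP
  set χ : Lp ℝ 2 μ := (hmemk 0).toLp (ts 0) with hχ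
  -- iterates of `P` on `χ`
  have hiter : ∀ k, (⇑P)^[k] χ = (hmemk k).toLp (ts k) := by
    intro k
    induction k with
    | zero => rfl
    | succ k ih =>
        rw [Function.iterate_succ_apply', ih]
        have hQ : (fun x => ∑ j, p j * ts k (K.inv j x)) = ts (k+1) :=
          funext fun x => (treeLevelSum_succ K B k x).symm
        have hQmem : MemLp (fun x => ∑ j, p j * ts k (K.inv j x)) 2 μ := by
          rw [hQ]; exact hmemk (k+1)
        have := adjoint_koopman_apply hp1 K.inv K.measurable_inv K.left_inv K.decomp
          hTmp (ts k) (hts_meas k) (hts_bd k) (hmemk k) hQmem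
        rw [hP, hU, this]
        exact MemLp.toLp_congr _ _ (Filter.Eventually.of_forall fun x => by rw [hQ])
  have hPnorm : ‖P‖ ≤ 1 := by
    rw [hP]
    calc ‖ContinuousLinearMap.adjoint U‖ = ‖U‖ := ContinuousLinearMap.adjoint.norm_map U
      _ ≤ 1 := koopmanCLM_norm_le hTmp
  -- fixed vectors of `P` are a.e. constant
  have hfix : ∀ g : Lp ℝ 2 μ, g ∈ P.eqLocus (1 : Lp ℝ 2 μ →L[ℝ] Lp ℝ 2 μ) → ∃ c : ℝ,
      ⇑g =ᵐ[μ] Function.const X c := by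
    intro g hg
    have hPg : P g = g := by simpa using LinearMap.mem_eqLocus.mp hg
    have hUg : U g = g := by
      have hnorm : ‖U g‖ = ‖g‖ := koopmanCLM_norm_apply hTmp g
      have hip : (inner ℝ g (U g) : ℝ) = ‖g‖ ^ 2 := by
        rw [← ContinuousLinearMap.adjoint_inner_left U g g, ← hP, hPg,
          real_inner_self_eq_norm_sq]
      have hz : ‖U g - g‖ ^ 2 = 0 := by
        rw [norm_sub_sq_real, hnorm, real_inner_comm, hip]
        ring
      have : ‖U g - g‖ = 0 := by
        have := sq_eq_zero_iff.mp hz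
        exact this
      rwa [norm_sub_eq_zero_iff] at this
    have hcomp : (⇑g) ∘ T =ᵐ[μ] ⇑g := by
      have h1 := koopmanCLM_coeFn hTmp g
      rw [hU] at hUg
      rw [hUg] at h1
      exact h1.symm
    exact hErg.ae_eq_const_of_ae_eq_comp_ae (Lp.aestronglyMeasurable g) hcomp
  -- the constant function `μ B`
  set c0 : ℝ := (μ B).toReal with hc0
  have hc0le : c0 ≤ 1 := by
    rw [hc0, ← ENNReal.toReal_one]
    exact ENNReal.toReal_mono ENNReal.one_ne_top prob_le_one
  have hc0nonneg : (0:ℝ) ≤ c0 := ENNReal.toReal_nonneg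
  have hc0mem : MemLp (fun _ : X => c0) 2 μ := memLp_const c0
  set cE : Lp ℝ 2 μ := hc0mem.toLp _ with hcE
  have hPc : P cE = cE := by
    have hb' : ∀ x : X, |(fun _ : X => c0) x| ≤ 1 := fun x => by
      rw [abs_of_nonneg hc0nonneg]; exact hc0le
    have hQ : (fun x => ∑ j, p j * (fun _ : X => c0) (K.inv j x)) = fun _ : X => c0 := by
      funext x
      rw [← Finset.sum_mul, hp.2, one_mul]
    have hQmem : MemLp (fun x => ∑ j, p j * (fun _ : X => c0) (K.inv j x)) 2 μ := by
      rw [hQ]; exact hc0mem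
    have := adjoint_koopman_apply hp1 K.inv K.measurable_inv K.left_inv K.decomp
      hTmp (fun _ => c0) measurable_const hb' hc0mem hQmem
    rw [hP, hU, this, hcE]
    exact MemLp.toLp_congr _ _ (Filter.Eventually.of_forall fun x => by rw [hQ])
  -- identify the projection of `χ`
  have hind_int : Integrable (B.indicator (1 : X → ℝ)) μ := (integrable_const 1).indicator hB
  have hproj : (↑((P.eqLocus (1 : Lp ℝ 2 μ →L[ℝ] Lp ℝ 2 μ)).orthogonalProjectionOnto χ) : Lp ℝ 2 μ) = cE := by
    rw [← Submodule.starProjection_apply]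
    refine Submodule.eq_starProjection_of_mem_of_inner_eq_zero
      (LinearMap.mem_eqLocus.mpr (by simpa using hPc)) ?_
    intro w hw
    obtain ⟨c, hc⟩ := hfix w hw
    rw [L2.inner_def]
    have hcongr : ∀ᵐ a ∂μ,
        (inner ℝ ((↑↑(χ - cE) : X → ℝ) a) ((↑↑w : X → ℝ) a) : ℝ)
          = (B.indicator (1 : X → ℝ) a - c0) * c := by
      filter_upwards [Lp.coeFn_sub χ cE, (hmemk 0).coeFn_toLp, hc0mem.coeFn_toLp, hc]
        with a h1 h2 h3 h4
      rw [RCLike.inner_apply, starRingEnd_apply, star_trivial, h1, Pi.sub_apply, h2, h3, h4]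
      rw [mul_comm]
      congr 1
      rw [hts, treeLevelSum_zero]
    rw [integral_congr_ae hcongr, integral_mul_const, integral_sub hind_int (integrable_const c0),
      integral_indicator_one hB, integral_const]
    simp [hc0, measureReal_def]
  -- mean ergodic theorem
  have hMET := ContinuousLinearMap.tendsto_birkhoffAverage_orthogonalProjection P hPnorm χ
  rw [hproj] at hMET
  have hlim : Tendsto (fun n => P (birkhoffAverage ℝ (⇑P) _root_.id n χ)) atTop (nhds cE) := by
    have := (P.continuous.tendsto cE).comp hMET
    rwa [hPc] at this
  -- identify the averages pointwise
  set gfun : ℕ → X → ℝ := fun n x => (1 / (n : ℝ)) * ∑ m ∈ Finset.range n, ts (m+1) x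
    with hgfun
  have hgmeas : ∀ n, Measurable (gfun n) := by
    intro n
    exact (measurable_const.mul (Finset.measurable_sum _ fun m _ => hts_meas (m+1)))
  have hsumLp : ∀ n, P (birkhoffAverage ℝ (⇑P) _root_.id n χ)
      = (n : ℝ)⁻¹ • ∑ k ∈ Finset.range n, (hmemk (k+1)).toLp (ts (k+1)) := by
    intro n
    rw [birkhoffAverage, birkhoffSum, _root_.map_smul, map_sum]
    congr 1
    refine Finset.sum_congr rfl fun k _ => ?_
    rw [id_eq, ← Function.iterate_succ_apply' (⇑P) k χ, hiter]
  have hcoe : ∀ n, ⇑(P (birkhoffAverage ℝ (⇑P) _root_.id n χ)) =ᵐ[μ] gfun n := by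
    intro n
    rw [hsumLp n]
    have hall : ∀ᵐ x ∂μ, ∀ k ∈ Finset.range n,
        (↑↑((hmemk (k+1)).toLp (ts (k+1))) : X → ℝ) x = ts (k+1) x :=
      (ae_ball_iff (Finset.range n).countable_toSet).mpr fun k _ => (hmemk (k+1)).coeFn_toLp
    filter_upwards [Lp.coeFn_smul ((n : ℝ)⁻¹) (∑ k ∈ Finset.range n, (hmemk (k+1)).toLp (ts (k+1))),
      Lp_coeFn_finsetSum (Finset.range n) (fun k => (hmemk (k+1)).toLp (ts (k+1))), hall]
      with x h1 h2 h3
    rw [h1, Pi.smul_apply, h2, hgfun]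
    simp only [smul_eq_mul, one_div]
    congr 1
    exact Finset.sum_congr rfl fun k hk => h3 k hk
  -- convergence of `eLpNorm`s
  have hnorm0 : Tendsto (fun n => ‖P (birkhoffAverage ℝ (⇑P) _root_.id n χ) - cE‖)
      atTop (nhds 0) := tendsto_iff_norm_sub_tendsto_zero.mp hlim
  have heLp : Tendsto (fun n => eLpNorm (gfun n - fun _ => c0) 2 μ) atTop (nhds 0) := by
    have hEq : ∀ n, eLpNorm (gfun n - fun _ => c0) 2 μ
        = ENNReal.ofReal ‖P (birkhoffAverage ℝ (⇑P) _root_.id n χ) - cE‖ := by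
      intro n
      rw [Lp.norm_def, ENNReal.ofReal_toReal (Lp.eLpNorm_ne_top _)]
      refine eLpNorm_congr_ae ?_
      filter_upwards [Lp.coeFn_sub (P (birkhoffAverage ℝ (⇑P) _root_.id n χ)) cE, hcoe n,
        hc0mem.coeFn_toLp] with x h1 h2 h3
      rw [Pi.sub_apply, h1, Pi.sub_apply, h2, h3]
    simp only [hEq]
    have := ENNReal.tendsto_ofReal hnorm0
    simpa using this
  have htm : TendstoInMeasure μ gfun atTop (fun _ => c0) :=
    tendstoInMeasure_of_tendsto_eLpNorm (by norm_num)
      (fun n => (hgmeas n).aestronglyMeasurable) aestronglyMeasurable_const heLp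
  -- extract `N`
  have hδ : (0 : ℝ≥0∞) < min (ENNReal.ofReal ε) (1/2) :=
    lt_min (ENNReal.ofReal_pos.2 hε) (by norm_num)
  have hev : ∀ᶠ n in atTop, μ {x | ε ≤ dist (gfun n x) c0} < min (ENNReal.ofReal ε) (1/2) :=
    (tendstoInMeasure_iff_dist.mp htm ε hε).eventually (gt_mem_nhds hδ)
  obtain ⟨N, hN⟩ := eventually_atTop.mp hev
  refine ⟨N, fun n hn => ?_⟩
  set G : Set X := {x | dist (gfun n x) c0 < ε} with hG
  have hGm : MeasurableSet G :=
    measurableSet_lt ((hgmeas n).dist measurable_const) measurable_const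
  have hGcompl : Gᶜ = {x | ε ≤ dist (gfun n x) c0} := by
    ext x
    simp [hG, not_lt]
  have hGc : μ Gᶜ < min (ENNReal.ofReal ε) (1/2) := by
    rw [hGcompl]; exact hN n hn
  refine ⟨G, hGm, ?_, ?_⟩
  · have hμG : μ G = 1 - μ Gᶜ := by
      have := prob_compl_eq_one_sub (μ := μ) hGm.compl
      rwa [compl_compl] at this
    rw [hμG, lt_tsub_iff_right]
    have h1 : μ Gᶜ < ENNReal.ofReal ε := lt_of_lt_of_le hGc (min_le_left _ _)
    have h2 : μ Gᶜ < 1/2 := lt_of_lt_of_le hGc (min_le_right _ _)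
    rcases lt_or_ge ε 1 with hε1 | hε1
    · calc ENNReal.ofReal (1 - ε) + μ Gᶜ
          < ENNReal.ofReal (1 - ε) + ENNReal.ofReal ε :=
            ENNReal.add_lt_add_left ENNReal.ofReal_ne_top h1
        _ = ENNReal.ofReal 1 := by rw [← ENNReal.ofReal_add (by linarith) hε.le]; norm_num
        _ = 1 := ENNReal.ofReal_one
    · have hz : ENNReal.ofReal (1 - ε) = 0 := ENNReal.ofReal_eq_zero.2 (by linarith)
      rw [hz, zero_add]
      calc μ Gᶜ < 1/2 := h2
        _ < 1 := by norm_num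
  · intro x hx
    have hx' : dist (gfun n x) c0 < ε := hx
    rw [Real.dist_eq] at hx'
    exact hx'


end
end

section
/- (Tree Ergodic Theorem.) Let X = (X, 𝓑, μ, T) be an ergodic p-endomorphism and P : X → C a finite measurable partition. For every ε > 0, for all sufficiently large M there is a set G of measure ≥ 1−ε such that every x ∈ G is ε,M-generic for P. -/
open MeasureTheory Filter
open scoped ENNReal symmDiff Classical

noncomputable section

namespace TreeErgodicAux

open Measure

variable {s : ℕ} {p : Fin s → ℝ} {X : Type} [MeasurableSpace X]
  {μ : Measure X} {T : X → X}

/- ### Algebra -/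

lemma variance_sum (hp : IsProbVec p) (a : Fin s → ℝ) :
    ∑ j, p j * (a j - ∑ k, p k * a k) ^ 2
      = ∑ j, p j * (a j) ^ 2 - (∑ k, p k * a k) ^ 2 := by
  set m := ∑ k, p k * a k with hm
  have h : ∀ j ∈ Finset.univ, p j * (a j - m) ^ 2
      = p j * (a j) ^ 2 - 2 * m * (p j * a j) + m ^ 2 * p j := fun j _ => by ring
  rw [Finset.sum_congr rfl h, Finset.sum_add_distrib, Finset.sum_sub_distrib,
    ← Finset.mul_sum, ← Finset.mul_sum, ← hm, hp.2]
  ring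

lemma sq_sum_le (hp : IsProbVec p) (a : Fin s → ℝ) :
    (∑ k, p k * a k) ^ 2 ≤ ∑ j, p j * (a j) ^ 2 := by
  have h0 : 0 ≤ ∑ j, p j * (a j - ∑ k, p k * a k) ^ 2 :=
    Finset.sum_nonneg fun j _ => mul_nonneg (hp.1 j).le (sq_nonneg _)
  rw [variance_sum hp a] at h0
  linarith

/- ### Lists and nodes -/

lemma ofFn_snoc {n : ℕ} (a : Fin n → Fin s) (j : Fin s) :
    List.ofFn (Fin.snoc a j) = List.ofFn a ++ [j] := by
  rw [List.ofFn_succ']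
  simp [Fin.snoc_castSucc, Fin.snoc_last]

variable (K : TreeSystem p μ T)

lemma invNode_nil (x : X) : K.invNode [] x = x := rfl

lemma invNode_cons (a : Fin s) (v : List (Fin s)) (x : X) :
    K.invNode (a :: v) x = K.inv a (K.invNode v x) := rfl

lemma invNode_append (v w : List (Fin s)) (x : X) :
    K.invNode (v ++ w) x = K.invNode v (K.invNode w x) := by
  simp [TreeSystem.invNode, List.foldr_append]

lemma nodeWeight_append (v w : List (Fin s)) :
    nodeWeight p (v ++ w) = nodeWeight p v * nodeWeight p w := by
  simp [nodeWeight]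

lemma nodeWeight_singleton (j : Fin s) : nodeWeight p [j] = p j := by
  simp [nodeWeight]

lemma measurable_invNode (v : List (Fin s)) : Measurable (K.invNode v) := by
  induction v with
  | nil => exact measurable_id
  | cons a l ih => exact (K.measurable_inv a).comp ih

/- ### Measure lemmas -/

lemma smul_map_le (j : Fin s) (A : Set X) :
    ENNReal.ofReal (p j) * μ.map (K.inv j) A ≤ μ A := by
  conv_rhs => rw [K.decomp]
  rw [Measure.finset_sum_apply]
  refine Finset.single_le_sum (f := fun j => (ENNReal.ofReal (p j) • Measure.map (K.inv j) μ) A)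
    (fun i _ => zero_le) (Finset.mem_univ j) |>.trans_eq' ?_
  simp

lemma map_ac (hp : IsProbVec p) (j : Fin s) : μ.map (K.inv j) ≪ μ := by
  intro A hA
  have h := smul_map_le K j A
  rw [hA] at h
  have h0 : ENNReal.ofReal (p j) * (μ.map (K.inv j)) A = 0 := le_antisymm h zero_le
  rcases mul_eq_zero.mp h0 with h | h
  · exact absurd h (by simp [ENNReal.ofReal_eq_zero, not_le, hp.1 j])
  · exact h

lemma qmp (hp : IsProbVec p) (j : Fin s) :
    Measure.QuasiMeasurePreserving (K.inv j) μ μ :=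
  ⟨K.measurable_inv j, map_ac K hp j⟩

lemma qmp_invNode (hp : IsProbVec p) (v : List (Fin s)) :
    Measure.QuasiMeasurePreserving (K.invNode v) μ μ := by
  induction v with
  | nil => exact Measure.QuasiMeasurePreserving.id μ
  | cons a l ih =>
      have : K.invNode (a :: l) = K.inv a ∘ K.invNode l := rfl
      rw [this]
      exact (qmp K hp a).comp ih

lemma lintegral_decomp (hp : IsProbVec p) (g : X → ℝ≥0∞) (hg : AEMeasurable g μ) :
    ∑ j, ENNReal.ofReal (p j) * ∫⁻ x, g (K.inv j x) ∂μ = ∫⁻ x, g x ∂μ := by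
  have h1 : ∀ j : Fin s, ∫⁻ x, g (K.inv j x) ∂μ = ∫⁻ y, g y ∂(μ.map (K.inv j)) := by
    intro j
    exact (lintegral_map' (hg.mono_ac (map_ac K hp j))
      (K.measurable_inv j).aemeasurable).symm
  calc ∑ j, ENNReal.ofReal (p j) * ∫⁻ x, g (K.inv j x) ∂μ
      = ∑ j, ∫⁻ y, g y ∂(ENNReal.ofReal (p j) • μ.map (K.inv j)) := by
        simp_rw [lintegral_smul_measure, smul_eq_mul]; exact Finset.sum_congr rfl fun j _ => by rw [h1 j]
    _ = ∫⁻ y, g y ∂(∑ j, ENNReal.ofReal (p j) • μ.map (K.inv j)) :=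
        (lintegral_finset_sum_measure _ _ _).symm
    _ = ∫⁻ x, g x ∂μ := by rw [← K.decomp]

end TreeErgodicAux


namespace TreeErgodicAux

open Measure

variable {s : ℕ} {p : Fin s → ℝ} {X : Type} [MeasurableSpace X]
  {μ : Measure X} {T : X → X} (K : TreeSystem p μ T)

/- ### The transfer operator, pointwise -/

def phi (f : X → ℝ) (x : X) : ℝ := ∑ j, p j * f (K.inv j x)

lemma aesm_phi {f : X → ℝ} (hp : IsProbVec p) (hf : AEStronglyMeasurable f μ) :
    AEStronglyMeasurable (phi K f) μ := by
  refine Finset.aestronglyMeasurable_fun_sum _ fun j _ => ?_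
  exact (hf.comp_quasiMeasurePreserving (qmp K hp j)).const_mul _

lemma phi_congr_ae (hp : IsProbVec p) {f g : X → ℝ} (h : f =ᵐ[μ] g) :
    phi K f =ᵐ[μ] phi K g := by
  have h1 : ∀ j : Fin s, ∀ᵐ x ∂μ, f (K.inv j x) = g (K.inv j x) := fun j =>
    (qmp K hp j).ae_eq h
  filter_upwards [ae_all_iff.mpr h1] with x hx
  exact Finset.sum_congr rfl fun j _ => by rw [hx j]

lemma ennnorm_sq (r : ℝ) : (‖r‖₊ : ℝ≥0∞) ^ (2 : ℝ) = ENNReal.ofReal (r ^ 2) := by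
  rw [← enorm_eq_nnnorm, Real.enorm_eq_ofReal_abs, ENNReal.ofReal_rpow_of_nonneg (abs_nonneg r) (by norm_num),
    show |r| ^ (2:ℝ) = |r| ^ (2:ℕ) from Real.rpow_natCast |r| 2, sq_abs]

lemma eLpNorm_two_eq (f : X → ℝ) :
    eLpNorm f 2 μ = (∫⁻ x, ENNReal.ofReal ((f x) ^ 2) ∂μ) ^ (1 / 2 : ℝ) := by
  rw [eLpNorm_eq_lintegral_rpow_enorm_toReal two_ne_zero ENNReal.ofNat_ne_top]
  congr 1
  refine lintegral_congr fun x => ?_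
  rw [ENNReal.toReal_ofNat]
  exact ennnorm_sq (f x)

lemma lintegral_sq_decomp (hp : IsProbVec p) {f : X → ℝ} (hf : AEMeasurable f μ) :
    ∫⁻ x, ENNReal.ofReal (∑ j, p j * (f (K.inv j x)) ^ 2) ∂μ
      = ∫⁻ x, ENNReal.ofReal ((f x) ^ 2) ∂μ := by
  have h1 : ∀ x, ENNReal.ofReal (∑ j, p j * (f (K.inv j x)) ^ 2)
      = ∑ j, ENNReal.ofReal (p j) * ENNReal.ofReal ((f (K.inv j x)) ^ 2) := by
    intro x
    rw [ENNReal.ofReal_sum_of_nonneg fun j _ => mul_nonneg (hp.1 j).le (sq_nonneg _)]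
    exact Finset.sum_congr rfl fun j _ => ENNReal.ofReal_mul (hp.1 j).le
  simp_rw [h1]
  rw [lintegral_finset_sum' _ fun j _ => ?_]
  · calc ∑ j, ∫⁻ x, ENNReal.ofReal (p j) * ENNReal.ofReal ((f (K.inv j x)) ^ 2) ∂μ
        = ∑ j, ENNReal.ofReal (p j) * ∫⁻ x, ENNReal.ofReal ((f (K.inv j x)) ^ 2) ∂μ := by
          refine Finset.sum_congr rfl fun j _ => lintegral_const_mul'' _ ?_
          exact (ENNReal.measurable_ofReal.comp_aemeasurable
            ((hf.comp_quasiMeasurePreserving (qmp K hp j)).pow_const 2))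
      _ = ∫⁻ x, ENNReal.ofReal ((f x) ^ 2) ∂μ := by
          exact lintegral_decomp K hp _ (ENNReal.measurable_ofReal.comp_aemeasurable
            (hf.pow_const 2))
  · exact (ENNReal.measurable_ofReal.comp_aemeasurable
        ((hf.comp_quasiMeasurePreserving (qmp K hp j)).pow_const 2)).const_mul _

lemma lintegral_sq_phi_le (hp : IsProbVec p) {f : X → ℝ} (hf : AEMeasurable f μ) :
    ∫⁻ x, ENNReal.ofReal ((phi K f x) ^ 2) ∂μ
      ≤ ∫⁻ x, ENNReal.ofReal ((f x) ^ 2) ∂μ := by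
  rw [← lintegral_sq_decomp K hp hf]
  refine lintegral_mono fun x => ENNReal.ofReal_le_ofReal ?_
  exact sq_sum_le hp fun j => f (K.inv j x)

lemma eLpNorm_phi_le (hp : IsProbVec p) {f : X → ℝ} (hf : AEMeasurable f μ) :
    eLpNorm (phi K f) 2 μ ≤ eLpNorm f 2 μ := by
  rw [eLpNorm_two_eq, eLpNorm_two_eq]
  exact ENNReal.rpow_le_rpow (lintegral_sq_phi_le K hp hf) (by norm_num)

lemma memLp_phi (hp : IsProbVec p) {f : X → ℝ} (hf : MemLp f 2 μ) :
    MemLp (phi K f) 2 μ :=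
  ⟨aesm_phi K hp hf.1, lt_of_le_of_lt (eLpNorm_phi_le K hp hf.1.aemeasurable) hf.2⟩

end TreeErgodicAux


namespace TreeErgodicAux

open Measure

variable {s : ℕ} {p : Fin s → ℝ} {X : Type} [MeasurableSpace X]
  {μ : Measure X} {T : X → X} (K : TreeSystem p μ T) [IsProbabilityMeasure μ]

/- ### The transfer operator on L² -/

def DopFun (hp : IsProbVec p) (f : Lp ℝ 2 μ) : Lp ℝ 2 μ :=
  (memLp_phi K hp (Lp.memLp f)).toLp (phi K ⇑f)

lemma DopFun_add (hp : IsProbVec p) (f g : Lp ℝ 2 μ) :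
    DopFun K hp (f + g) = DopFun K hp f + DopFun K hp g := by
  rw [DopFun, DopFun, DopFun, ← MemLp.toLp_add]
  refine MemLp.toLp_congr (memLp_phi K hp (Lp.memLp (f + g)))
    ((memLp_phi K hp (Lp.memLp f)).add (memLp_phi K hp (Lp.memLp g))) ?_
  refine (phi_congr_ae K hp (Lp.coeFn_add f g)).trans (.of_forall fun x => ?_)
  simp [phi, Finset.sum_add_distrib, mul_add]

lemma DopFun_smul (hp : IsProbVec p) (c : ℝ) (f : Lp ℝ 2 μ) :
    DopFun K hp (c • f) = c • DopFun K hp f := by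
  rw [DopFun, DopFun]
  refine (MemLp.toLp_congr (memLp_phi K hp (Lp.memLp (c • f)))
    ((memLp_phi K hp (Lp.memLp f)).const_smul c) ?_).trans (MemLp.toLp_const_smul c _)
  refine (phi_congr_ae K hp (Lp.coeFn_smul c f)).trans (.of_forall fun x => ?_)
  simp only [phi, Pi.smul_apply, smul_eq_mul, Finset.mul_sum]
  exact Finset.sum_congr rfl fun j _ => by ring

lemma DopFun_norm_le (hp : IsProbVec p) (f : Lp ℝ 2 μ) : ‖DopFun K hp f‖ ≤ ‖f‖ := by
  rw [DopFun, Lp.norm_toLp, Lp.norm_def]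
  exact ENNReal.toReal_mono (Lp.eLpNorm_ne_top f)
    (eLpNorm_phi_le K hp (Lp.memLp f).1.aemeasurable)

def Dop (hp : IsProbVec p) : Lp ℝ 2 μ →L[ℝ] Lp ℝ 2 μ :=
  LinearMap.mkContinuous
    { toFun := DopFun K hp
      map_add' := DopFun_add K hp
      map_smul' := DopFun_smul K hp }
    1 fun f => by simpa using DopFun_norm_le K hp f

lemma Dop_coeFn (hp : IsProbVec p) (f : Lp ℝ 2 μ) :
    ⇑(Dop K hp f) =ᵐ[μ] phi K ⇑f :=
  MemLp.coeFn_toLp (memLp_phi K hp (Lp.memLp f))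

def oneLp (μ : Measure X) [IsProbabilityMeasure μ] : Lp ℝ 2 μ :=
  (memLp_const (1 : ℝ)).toLp (fun _ => (1 : ℝ))

lemma oneLp_coeFn : ⇑(oneLp μ) =ᵐ[μ] fun _ => (1 : ℝ) :=
  MemLp.coeFn_toLp _

lemma Dop_one (hp : IsProbVec p) : Dop K hp (oneLp μ) = oneLp μ := by
  refine Lp.ext ((Dop_coeFn K hp _).trans ?_ |>.trans (oneLp_coeFn (μ := μ)).symm)
  refine (phi_congr_ae K hp (oneLp_coeFn (μ := μ))).trans (.of_forall fun x => ?_)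
  simp [phi, hp.2]

/- ### Pointwise description of iterates -/

def explicitD (f : X → ℝ) (n : ℕ) : X → ℝ := fun x =>
  ∑ a : Fin n → Fin s, nodeWeight p (List.ofFn a) * f (K.invNode (List.ofFn a) x)

lemma explicitD_zero (f : X → ℝ) : explicitD K f 0 = f := by
  funext x
  rw [explicitD, Fintype.sum_unique]
  simp [nodeWeight, invNode_nil]

lemma explicitD_succ (f : X → ℝ) (n : ℕ) :
    explicitD K f (n + 1) = phi K (explicitD K f n) := by
  funext x
  rw [explicitD, ← Fintype.sum_equiv (Fin.snocEquiv (fun _ => Fin s))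
    (fun q => p q.1 * (nodeWeight p (List.ofFn q.2) *
      f (K.invNode (List.ofFn q.2) (K.inv q.1 x)))) _ (fun q => ?_)]
  · rw [Fintype.sum_prod_type]
    refine Finset.sum_congr rfl fun j _ => ?_
    simp only [phi, explicitD, Finset.mul_sum]
  · have hsnoc : (Fin.snocEquiv (fun _ => Fin s)) q = Fin.snoc q.2 q.1 := by
      funext i; rfl
    rw [hsnoc, ofFn_snoc, nodeWeight_append, nodeWeight_singleton, invNode_append]
    have : K.invNode [q.1] x = K.inv q.1 x := rfl
    rw [this]; ring

lemma coeFn_iterate (hp : IsProbVec p) (f : Lp ℝ 2 μ) (n : ℕ) :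
    ⇑((fun g => Dop K hp g)^[n] f) =ᵐ[μ] explicitD K (⇑f) n := by
  induction n with
  | zero => rw [explicitD_zero]; rfl
  | succ n ih =>
      rw [Function.iterate_succ_apply']
      refine (Dop_coeFn K hp _).trans ?_
      rw [explicitD_succ]
      exact phi_congr_ae K hp ih

/- ### Fixed points are a.e. constant -/

lemma fixed_const (hp : IsProbVec p) (hT : MeasurePreserving T μ μ) (hErg : Ergodic T μ)
    (f : Lp ℝ 2 μ) (hf : Dop K hp f = f) : ∃ c : ℝ, ⇑f =ᵐ[μ] fun _ => c := by
  set ft : X → ℝ := ⇑f with hft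
  have hsm : AEStronglyMeasurable ft μ := Lp.aestronglyMeasurable f
  have hm : AEMeasurable ft μ := hsm.aemeasurable
  have hfix : phi K ft =ᵐ[μ] ft := (Dop_coeFn K hp f).symm.trans (by rw [hf])
  -- finiteness of the square integral
  have hI : ∫⁻ x, ENNReal.ofReal ((ft x) ^ 2) ∂μ ≠ ∞ := by
    intro h
    have := Lp.eLpNorm_ne_top f
    rw [eLpNorm_two_eq, h] at this
    exact this (ENNReal.top_rpow_of_pos (by norm_num))
  -- key quantity
  set A : X → ℝ := fun x => ∑ j, p j * (ft (K.inv j x) - phi K ft x) ^ 2 with hA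
  have hA_nonneg : ∀ x, 0 ≤ A x := fun x =>
    Finset.sum_nonneg fun j _ => mul_nonneg (hp.1 j).le (sq_nonneg _)
  have hAmeas : AEMeasurable (fun x => ENNReal.ofReal (A x)) μ := by
    refine ENNReal.measurable_ofReal.comp_aemeasurable ?_
    refine Finset.aemeasurable_fun_sum _ fun j _ => ?_
    exact (((hm.comp_quasiMeasurePreserving (qmp K hp j)).sub
      (aesm_phi K hp hsm).aemeasurable).pow_const 2).const_mul _
  have hsplit : ∀ x, ENNReal.ofReal (∑ j, p j * (ft (K.inv j x)) ^ 2)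
      = ENNReal.ofReal (A x) + ENNReal.ofReal ((phi K ft x) ^ 2) := by
    intro x
    rw [← ENNReal.ofReal_add (hA_nonneg x) (sq_nonneg _)]
    congr 1
    have := variance_sum hp (fun j => ft (K.inv j x))
    rw [hA]
    simp only [phi] at *
    linarith [this]
  have hphi2 : ∫⁻ x, ENNReal.ofReal ((phi K ft x) ^ 2) ∂μ
      = ∫⁻ x, ENNReal.ofReal ((ft x) ^ 2) ∂μ :=
    lintegral_congr_ae (hfix.mono fun x hx => by dsimp only; rw [hx])
  have hkey : ∫⁻ x, ENNReal.ofReal ((ft x) ^ 2) ∂μ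
      = ∫⁻ x, ENNReal.ofReal (A x) ∂μ + ∫⁻ x, ENNReal.ofReal ((ft x) ^ 2) ∂μ := by
    calc ∫⁻ x, ENNReal.ofReal ((ft x) ^ 2) ∂μ
        = ∫⁻ x, ENNReal.ofReal (∑ j, p j * (ft (K.inv j x)) ^ 2) ∂μ :=
          (lintegral_sq_decomp K hp hm).symm
      _ = ∫⁻ x, (ENNReal.ofReal (A x) + ENNReal.ofReal ((phi K ft x) ^ 2)) ∂μ :=
          lintegral_congr fun x => hsplit x
      _ = ∫⁻ x, ENNReal.ofReal (A x) ∂μ + ∫⁻ x, ENNReal.ofReal ((phi K ft x) ^ 2) ∂μ :=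
          lintegral_add_left' hAmeas _
      _ = ∫⁻ x, ENNReal.ofReal (A x) ∂μ + ∫⁻ x, ENNReal.ofReal ((ft x) ^ 2) ∂μ := by
          rw [hphi2]
  have hA0 : ∫⁻ x, ENNReal.ofReal (A x) ∂μ = 0 := by
    rw [add_comm] at hkey
    have h2 : ∫⁻ x, ENNReal.ofReal ((ft x) ^ 2) ∂μ + 0
        = ∫⁻ x, ENNReal.ofReal ((ft x) ^ 2) ∂μ + ∫⁻ x, ENNReal.ofReal (A x) ∂μ := by
      rw [add_zero]; exact hkey
    exact ((ENNReal.add_right_inj hI).mp h2).symm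
  have hAae : ∀ᵐ x ∂μ, A x = 0 := by
    have := (lintegral_eq_zero_iff' hAmeas).mp hA0
    filter_upwards [this] with x hx
    have : ENNReal.ofReal (A x) = 0 := hx
    rw [ENNReal.ofReal_eq_zero] at this
    exact le_antisymm this (hA_nonneg x)
  -- a.e., every preimage has the same value
  have hsame : ∀ᵐ x ∂μ, ∀ j, ft (K.inv j x) = ft x := by
    filter_upwards [hAae, hfix] with x hx hfx j
    have hterm := (Finset.sum_eq_zero_iff_of_nonneg
      (fun j _ => mul_nonneg (hp.1 j).le (sq_nonneg _))).mp hx j (Finset.mem_univ j)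
    have h2 : (ft (K.inv j x) - phi K ft x) ^ 2 = 0 := by
      rcases mul_eq_zero.mp hterm with h | h
      · exact absurd h (ne_of_gt (hp.1 j))
      · exact h
    have := pow_eq_zero_iff (n := 2) (by norm_num) |>.mp h2
    have h3 : ft (K.inv j x) = phi K ft x := by linarith [sub_eq_zero.mp this]
    rw [h3, hfx]
  -- pull back along T and use surjectivity
  have hTsame : ∀ᵐ y ∂μ, ∀ j, ft (K.inv j (T y)) = ft (T y) :=
    hT.quasiMeasurePreserving.ae hsame
  have hinv : ft ∘ T =ᵐ[μ] ft := by
    filter_upwards [hTsame, K.surj] with y hy ⟨j, hj⟩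
    have := hy j
    rw [hj] at this
    exact this.symm ▸ rfl
  obtain ⟨c, hc⟩ := hErg.ae_eq_const_of_ae_eq_comp_ae hsm hinv
  exact ⟨c, hc⟩

end TreeErgodicAux


namespace TreeErgodicAux

open Measure Topology

variable {s : ℕ} {p : Fin s → ℝ} {X : Type} [MeasurableSpace X]
  {μ : Measure X} {T : X → X} (K : TreeSystem p μ T) [IsProbabilityMeasure μ]

lemma inner_one_left (f : Lp ℝ 2 μ) :
    @inner ℝ _ _ (oneLp μ) f = ∫ x, (f : X → ℝ) x ∂μ := by
  rw [MeasureTheory.L2.inner_def]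
  have : ∀ᵐ x ∂μ, (inner ℝ ((oneLp μ : X → ℝ) x) ((f : X → ℝ) x) : ℝ) = (f : X → ℝ) x := by
    filter_upwards [oneLp_coeFn (μ := μ)] with x hx
    rw [RCLike.inner_apply, hx]
    simp
  exact integral_congr_ae this

lemma norm_Dop_le (hp : IsProbVec p) : ‖(Dop K hp : Lp ℝ 2 μ →L[ℝ] Lp ℝ 2 μ)‖ ≤ 1 :=
  LinearMap.mkContinuous_norm_le _ zero_le_one _

instance instHOP (hp : IsProbVec p) :
    Submodule.HasOrthogonalProjection
      (LinearMap.eqLocus ((Dop K hp : Lp ℝ 2 μ →L[ℝ] Lp ℝ 2 μ) :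
        Lp ℝ 2 μ →ₗ[ℝ] Lp ℝ 2 μ) 1) := by
  haveI : CompleteSpace
      (LinearMap.eqLocus ((Dop K hp : Lp ℝ 2 μ →L[ℝ] Lp ℝ 2 μ) :
        Lp ℝ 2 μ →ₗ[ℝ] Lp ℝ 2 μ) 1) :=
    (isClosed_eq (Dop K hp).continuous continuous_id).completeSpace_coe
  infer_instance

set_option synthInstance.maxHeartbeats 1000000 in
lemma projection_eq (hp : IsProbVec p) (hT : MeasurePreserving T μ μ) (hErg : Ergodic T μ)
    (f : Lp ℝ 2 μ) :
    (Submodule.orthogonalProjectionOnto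
        (LinearMap.eqLocus (Dop K hp : Lp ℝ 2 μ →ₗ[ℝ] Lp ℝ 2 μ) 1) f : Lp ℝ 2 μ)
      = (∫ x, (f : X → ℝ) x ∂μ) • oneLp μ := by
  set v : Lp ℝ 2 μ := (∫ x, (f : X → ℝ) x ∂μ) • oneLp μ with hv
  have hmem : v ∈ LinearMap.eqLocus (Dop K hp : Lp ℝ 2 μ →ₗ[ℝ] Lp ℝ 2 μ) 1 := by
    rw [LinearMap.mem_eqLocus]
    show Dop K hp v = v
    rw [hv, _root_.map_smul, Dop_one K hp]
  have hvcoe : ⇑v =ᵐ[μ] fun _ => ∫ x, (f : X → ℝ) x ∂μ := by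
    refine (Lp.coeFn_smul _ _).trans ?_
    filter_upwards [oneLp_coeFn (μ := μ)] with x hx
    simp [hx]
  have hintv : ∫ x, (v : X → ℝ) x ∂μ = ∫ x, (f : X → ℝ) x ∂μ := by
    rw [integral_congr_ae hvcoe, integral_const]
    simp
  have horth : f - v ∈ (LinearMap.eqLocus (Dop K hp : Lp ℝ 2 μ →ₗ[ℝ] Lp ℝ 2 μ) 1)ᗮ := by
    rw [Submodule.mem_orthogonal]
    intro u hu
    have hufix : Dop K hp u = u := by
      have := LinearMap.mem_eqLocus.mp hu
      simpa using this
    obtain ⟨c, hc⟩ := fixed_const K hp hT hErg u hufix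
    have hu' : u = c • oneLp μ := by
      refine Lp.ext (hc.trans ?_)
      filter_upwards [Lp.coeFn_smul c (oneLp μ), oneLp_coeFn (μ := μ)] with x h1 h2
      rw [h1]; simp [h2]
    rw [hu', inner_smul_left, inner_sub_right, inner_one_left, inner_one_left, hintv]
    simp
  rw [Submodule.coe_orthogonalProjectionOnto_apply, Submodule.eq_starProjection_of_mem_orthogonal hmem horth]

set_option synthInstance.maxHeartbeats 1000000 in
lemma main_tendsto (hp : IsProbVec p) (hT : MeasurePreserving T μ μ) (hErg : Ergodic T μ)
    (f : Lp ℝ 2 μ) :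
    Filter.Tendsto
      (fun M => birkhoffAverage ℝ (fun g => Dop K hp g) _root_.id M (Dop K hp f)) atTop
      (𝓝 ((∫ x, (f : X → ℝ) x ∂μ) • oneLp μ)) := by
  have h := (Dop K hp).tendsto_birkhoffAverage_orthogonalProjection (𝕜 := ℝ)
    (norm_Dop_le K hp) f
  have h2 := (((Dop K hp).continuous.tendsto _).comp h)
  have hcomm : ∀ M, Dop K hp (birkhoffAverage ℝ (fun g => Dop K hp g) _root_.id M f)
      = birkhoffAverage ℝ (fun g => Dop K hp g) _root_.id M (Dop K hp f) := by
    intro M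
    simp only [birkhoffAverage, birkhoffSum, _root_.map_smul, _root_.map_sum]
    congr 1
    refine Finset.sum_congr rfl fun k _ => ?_
    simp only [id_eq]
    rw [← Function.iterate_succ_apply, Function.iterate_succ_apply']
  have heq : (fun M => birkhoffAverage ℝ (fun g => Dop K hp g) _root_.id M (Dop K hp f))
      = fun M => Dop K hp (birkhoffAverage ℝ (fun g => Dop K hp g) _root_.id M f) := by
    funext M; rw [hcomm]
  rw [heq]
  have hval : Dop K hp ((Submodule.orthogonalProjectionOnto
      (LinearMap.eqLocus (Dop K hp : Lp ℝ 2 μ →ₗ[ℝ] Lp ℝ 2 μ) 1) f : Lp ℝ 2 μ))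
      = (∫ x, (f : X → ℝ) x ∂μ) • oneLp μ := by
    rw [projection_eq K hp hT hErg f, _root_.map_smul, Dop_one K hp]
  rw [← hval]
  exact h2

end TreeErgodicAux


namespace TreeErgodicAux

open Measure Topology

variable {s : ℕ} {p : Fin s → ℝ} {X : Type} [MeasurableSpace X]
  {μ : Measure X} {T : X → X} (K : TreeSystem p μ T) [IsProbabilityMeasure μ]
  {C : Type} [Fintype C]

lemma coeFn_finset_sum {ι : Type*} (t : Finset ι) (F : ι → Lp ℝ 2 μ) :
    ⇑(∑ i ∈ t, F i) =ᵐ[μ] fun x => ∑ i ∈ t, (F i : X → ℝ) x := by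
  classical
  induction t using Finset.induction with
  | empty =>
      simp only [Finset.sum_empty]
      exact Lp.coeFn_zero ℝ 2 μ
  | @insert i t hnot ih =>
      rw [Finset.sum_insert hnot]
      filter_upwards [Lp.coeFn_add (F i) (∑ i ∈ t, F i), ih] with x hadd hx
      rw [hadd, Pi.add_apply, hx, Finset.sum_insert hnot]

def theta (P : X → C) (M : ℕ) (c : C) (x : X) : ℝ :=
  (1 / (M : ℝ)) * (∑ m ∈ Finset.range M, ∑ a : Fin (m + 1) → Fin s,
    if P (K.invNode (List.ofFn a) x) = c then nodeWeight p (List.ofFn a) else 0)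

lemma measurable_theta {P : X → C} (hP : ∀ c : C, MeasurableSet (P ⁻¹' {c}))
    (M : ℕ) (c : C) : Measurable (theta K P M c) := by
  refine Measurable.const_mul ?_ _
  refine Finset.measurable_sum _ fun m _ => ?_
  refine Finset.measurable_sum _ fun a _ => ?_
  exact Measurable.ite (measurable_invNode K _ (hP c)) measurable_const measurable_const

def fcLp {P : X → C} (hP : ∀ c : C, MeasurableSet (P ⁻¹' {c})) (c : C) : Lp ℝ 2 μ :=
  (memLp_indicator_const 2 (hP c) (1 : ℝ) (Or.inr (measure_ne_top μ _))).toLp _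

lemma fcLp_coe {P : X → C} (hP : ∀ c : C, MeasurableSet (P ⁻¹' {c})) (c : C) :
    ⇑(fcLp (μ := μ) hP c) =ᵐ[μ] (P ⁻¹' {c}).indicator (fun _ => (1 : ℝ)) :=
  MemLp.coeFn_toLp _

lemma explicitD_ind (hp : IsProbVec p) {P : X → C}
    (hP : ∀ c : C, MeasurableSet (P ⁻¹' {c})) (c : C) (n : ℕ) :
    explicitD K (⇑(fcLp (μ := μ) hP c)) n =ᵐ[μ]
      fun x => ∑ a : Fin n → Fin s,
        if P (K.invNode (List.ofFn a) x) = c then nodeWeight p (List.ofFn a) else 0 := by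
  have h0 : ∀ a : Fin n → Fin s, ∀ᵐ x ∂μ,
      (fcLp (μ := μ) hP c : X → ℝ) (K.invNode (List.ofFn a) x)
        = (P ⁻¹' {c}).indicator (fun _ => (1 : ℝ)) (K.invNode (List.ofFn a) x) := by
    intro a
    have := (qmp_invNode K hp (List.ofFn a)).ae_eq (fcLp_coe hP c)
    exact this
  filter_upwards [ae_all_iff.mpr h0] with x hx
  rw [explicitD]
  refine Finset.sum_congr rfl fun a _ => ?_
  rw [hx a, Set.indicator_apply]
  by_cases h : P (K.invNode (List.ofFn a) x) = c <;> simp [h, Set.mem_preimage]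

lemma theta_tendstoInMeasure (hp : IsProbVec p) (hT : MeasurePreserving T μ μ)
    (hErg : Ergodic T μ) {P : X → C} (hP : ∀ c : C, MeasurableSet (P ⁻¹' {c})) (c : C) :
    TendstoInMeasure μ (fun M => theta K P M c) atTop
      (fun _ => (μ (P ⁻¹' {c})).toReal) := by
  set fc : Lp ℝ 2 μ := fcLp (μ := μ) hP c with hfc
  have hint : ∫ x, (fc : X → ℝ) x ∂μ = (μ (P ⁻¹' {c})).toReal := by
    rw [integral_congr_ae (fcLp_coe hP c), integral_indicator_const (1 : ℝ) (hP c)]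
    simp [measureReal_def]
  set v : Lp ℝ 2 μ := (μ (P ⁻¹' {c})).toReal • oneLp μ with hv
  have hvcoe : ⇑v =ᵐ[μ] fun _ => (μ (P ⁻¹' {c})).toReal := by
    refine (Lp.coeFn_smul _ _).trans ?_
    filter_upwards [oneLp_coeFn (μ := μ)] with x hx
    simp [hx]
  have htend : Filter.Tendsto
      (fun M => birkhoffAverage ℝ (fun g => Dop K hp g) _root_.id M (Dop K hp fc))
      atTop (𝓝 v) := by
    have := main_tendsto K hp hT hErg fc
    rwa [hint] at this
  have htim := tendstoInMeasure_of_tendsto_Lp (μ := μ) htend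
  refine htim.congr (fun M => ?_) hvcoe
  -- identify the coeFn of the Birkhoff average with theta
  have h1 : birkhoffSum (fun g => Dop K hp g) _root_.id M (Dop K hp fc)
      = ∑ k ∈ Finset.range M, (fun g => Dop K hp g)^[k + 1] fc := by
    rw [birkhoffSum]
    exact Finset.sum_congr rfl fun k _ => by rw [id_eq, ← Function.iterate_succ_apply]
  have hsum : ⇑(birkhoffSum (fun g => Dop K hp g) _root_.id M (Dop K hp fc)) =ᵐ[μ]
      fun x => ∑ k ∈ Finset.range M, ∑ a : Fin (k + 1) → Fin s,
        if P (K.invNode (List.ofFn a) x) = c then nodeWeight p (List.ofFn a) else 0 := by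
    rw [h1]
    refine (coeFn_finset_sum _ _).trans ?_
    have h2 : ∀ᵐ x ∂μ, ∀ k ∈ Finset.range M,
        ((fun g => Dop K hp g)^[k + 1] fc : X → ℝ) x
          = ∑ a : Fin (k + 1) → Fin s,
            if P (K.invNode (List.ofFn a) x) = c then nodeWeight p (List.ofFn a) else 0 := by
      rw [Filter.eventually_all_finset]
      intro k _
      filter_upwards [coeFn_iterate K hp fc (k + 1), explicitD_ind K hp hP c (k + 1)]
        with x hx1 hx2
      rw [hx1, hx2]
    filter_upwards [h2] with x hx
    exact Finset.sum_congr rfl fun k hk => hx k hk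
  have havg : (birkhoffAverage ℝ (fun g => Dop K hp g) _root_.id M (Dop K hp fc) : Lp ℝ 2 μ)
      = (M : ℝ)⁻¹ • birkhoffSum (fun g => Dop K hp g) _root_.id M (Dop K hp fc) := rfl
  rw [havg]
  refine (Lp.coeFn_smul ((M : ℝ)⁻¹)
    (birkhoffSum (fun g => Dop K hp g) _root_.id M (Dop K hp fc))).trans ?_
  filter_upwards [hsum] with x hx
  simp only [Pi.smul_apply, smul_eq_mul, hx, theta, one_div]

end TreeErgodicAux



/-- **Proposition 2.2.3 (Tree Ergodic Theorem).** Let `X = (X,𝓑,μ,T)` be an ergodic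
`p`-endomorphism and `P : X → C` a finite measurable partition.  For every `ε > 0`, for all
sufficiently large `M` there is a set `G` of measure `≥ 1 − ε` such that every `x ∈ G` is
`ε,M`-generic for `P`, i.e. `∑_{c ∈ C} |θ_{x,M,P}(c) − μ(P⁻¹(c))| < ε` where
`θ_{x,M,P}(c) = (1/M) ∑ { w_v : 0 < |v| ≤ M, P(T_v x) = c }`. -/
theorem tree_ergodic_theorem
    {s : ℕ} (p : Fin s → ℝ) (hp : IsProbVec p)
    {X : Type} [MeasurableSpace X] [StandardBorelSpace X]
    (μ : Measure X) [IsProbabilityMeasure μ] [NullSingletonClass μ]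
    (T : X → X) (hX : IsPEndo p μ T) (hErg : Ergodic T μ)
    (K : TreeSystem p μ T)
    {C : Type} [Fintype C] (P : X → C) (hP : ∀ c : C, MeasurableSet (P ⁻¹' {c}))
    (ε : ℝ) (hε : 0 < ε) :
    ∃ M₀ : ℕ, ∀ M, M₀ ≤ M → ∃ G : Set X, MeasurableSet G ∧
      ENNReal.ofReal (1 - ε) ≤ μ G ∧
      ∀ x ∈ G,
        ∑ c : C,
          |(1 / (M : ℝ)) * (∑ m ∈ Finset.range M, ∑ a : Fin (m + 1) → Fin s,
              if P (K.invNode (List.ofFn a) x) = c then nodeWeight p (List.ofFn a) else 0)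
            - (μ (P ⁻¹' {c})).toReal| < ε := by

  classical
  have hT : MeasurePreserving T μ μ := hX.2.1
  set δ : ℝ := ε / (2 * (Fintype.card C + 1)) with hδdef
  have hδ : 0 < δ := by positivity
  set β : ℝ≥0∞ := ENNReal.ofReal (ε / (Fintype.card C + 1)) with hβdef
  have hβ : 0 < β := ENNReal.ofReal_pos.mpr (by positivity)
  have htim : ∀ c : C, TendstoInMeasure μ (fun M => TreeErgodicAux.theta K P M c) atTop
      (fun _ => (μ (P ⁻¹' {c})).toReal) := fun c =>
    TreeErgodicAux.theta_tendstoInMeasure K hp hT hErg hP c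
  have hev : ∀ᶠ M in atTop, ∀ c : C,
      μ {x | δ ≤ dist (TreeErgodicAux.theta K P M c x) ((μ (P ⁻¹' {c})).toReal)} < β := by
    rw [Filter.eventually_all]
    intro c
    exact (tendstoInMeasure_iff_dist.mp (htim c) δ hδ).eventually_lt_const hβ
  obtain ⟨M₀, hM₀⟩ := Filter.eventually_atTop.mp hev
  refine ⟨M₀, fun M hM => ?_⟩
  set G : Set X := {x | ∀ c : C,
    dist (TreeErgodicAux.theta K P M c x) ((μ (P ⁻¹' {c})).toReal) < δ} with hG
  have hGm : MeasurableSet G := by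
    have hGi : G = ⋂ c : C,
        {x | dist (TreeErgodicAux.theta K P M c x) ((μ (P ⁻¹' {c})).toReal) < δ} := by
      ext x; simp [hG]
    rw [hGi]
    refine MeasurableSet.iInter fun c => ?_
    have hm : Measurable fun x =>
        dist (TreeErgodicAux.theta K P M c x) ((μ (P ⁻¹' {c})).toReal) :=
      (TreeErgodicAux.measurable_theta K hP M c).dist measurable_const
    exact measurableSet_lt hm measurable_const
  have hGc : μ Gᶜ ≤ ENNReal.ofReal ε := by
    have hsub : Gᶜ ⊆ ⋃ c : C,
        {x | δ ≤ dist (TreeErgodicAux.theta K P M c x) ((μ (P ⁻¹' {c})).toReal)} := by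
      intro x hx
      simp only [hG, Set.mem_compl_iff, Set.mem_setOf_eq, not_forall, not_lt] at hx
      obtain ⟨c, hc⟩ := hx
      exact Set.mem_iUnion.mpr ⟨c, hc⟩
    have hcard : ((Fintype.card C : ℝ)) * (ε / (Fintype.card C + 1)) ≤ ε := by
      have h1 : (0:ℝ) < (Fintype.card C : ℝ) + 1 := by positivity
      calc ((Fintype.card C : ℝ)) * (ε / (Fintype.card C + 1))
          = ε * ((Fintype.card C : ℝ) / ((Fintype.card C : ℝ) + 1)) := by ring
        _ ≤ ε * 1 := by
            refine mul_le_mul_of_nonneg_left ?_ hε.le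
            rw [div_le_one h1]
            linarith
        _ = ε := mul_one ε
    calc μ Gᶜ ≤ μ (⋃ c : C,
          {x | δ ≤ dist (TreeErgodicAux.theta K P M c x) ((μ (P ⁻¹' {c})).toReal)}) :=
          measure_mono hsub
      _ ≤ ∑' c : C, μ {x | δ ≤ dist (TreeErgodicAux.theta K P M c x)
            ((μ (P ⁻¹' {c})).toReal)} := measure_iUnion_le _
      _ = ∑ c : C, μ {x | δ ≤ dist (TreeErgodicAux.theta K P M c x)
            ((μ (P ⁻¹' {c})).toReal)} := tsum_fintype _
      _ ≤ ∑ _c : C, β := Finset.sum_le_sum fun c _ => (hM₀ M hM c).le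
      _ = (Fintype.card C) * β := by rw [Finset.sum_const, Finset.card_univ, nsmul_eq_mul]
      _ = ENNReal.ofReal ((Fintype.card C : ℝ) * (ε / (Fintype.card C + 1))) := by
          rw [hβdef, ENNReal.ofReal_mul (by positivity), ENNReal.ofReal_natCast]
      _ ≤ ENNReal.ofReal ε := ENNReal.ofReal_le_ofReal hcard
  have hGμ : ENNReal.ofReal (1 - ε) ≤ μ G := by
    rcases le_or_gt (1 - ε) 0 with h | h
    · rw [ENNReal.ofReal_eq_zero.mpr h]; exact zero_le
    · have h1 : ENNReal.ofReal (1 - ε) = 1 - ENNReal.ofReal ε := by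
        rw [ENNReal.ofReal_sub _ hε.le, ENNReal.ofReal_one]
      rw [h1, tsub_le_iff_right]
      calc (1:ℝ≥0∞) = μ G + μ Gᶜ := by rw [measure_add_measure_compl hGm, measure_univ]
        _ ≤ μ G + ENNReal.ofReal ε := add_le_add_right hGc _
  refine ⟨G, hGm, hGμ, fun x hx => ?_⟩
  have hxc : ∀ c : C,
      |TreeErgodicAux.theta K P M c x - (μ (P ⁻¹' {c})).toReal| < δ := by
    intro c
    have := hx c
    rwa [Real.dist_eq] at this
  have hcardlt : ((Fintype.card C : ℝ)) * δ < ε := by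
    have h1 : (0:ℝ) < 2 * ((Fintype.card C : ℝ) + 1) := by positivity
    rw [hδdef]
    calc ((Fintype.card C : ℝ)) * (ε / (2 * (Fintype.card C + 1)))
        = ε * ((Fintype.card C : ℝ) / (2 * ((Fintype.card C : ℝ) + 1))) := by ring
      _ < ε * 1 := by
          refine mul_lt_mul_of_pos_left ?_ hε
          rw [div_lt_one h1]
          linarith
      _ = ε := mul_one ε
  calc ∑ c : C,
        |(1 / (M : ℝ)) * (∑ m ∈ Finset.range M, ∑ a : Fin (m + 1) → Fin s,
            if P (K.invNode (List.ofFn a) x) = c then nodeWeight p (List.ofFn a) else 0)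
          - (μ (P ⁻¹' {c})).toReal|
      ≤ (Finset.univ : Finset C).card • δ := by
        refine Finset.sum_le_card_nsmul _ _ _ fun c _ => ?_
        exact (hxc c).le
    _ = ((Fintype.card C : ℝ)) * δ := by rw [nsmul_eq_mul, Finset.card_univ]
    _ < ε := hcardlt

end
end

section
/- (Strong Tree Rokhlin Lemma.) Let X = (X, 𝓑, μ, T) be an ergodic p-endomorphism and P : X → C a finite measurable partition. Then for each ε > 0 and N ∈ ℕ there exists an ε-tree Rokhlin tower of height N+1 in X whose base B is independent of P, i.e. dist(P|B) = dist(P). -/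
open MeasureTheory Filter
open scoped ENNReal symmDiff Classical

noncomputable section

section StrongRokhlinAux
open Set

lemma aux_le_iSup_add {ι : Type*} [Nonempty ι] {b : ι → ℝ≥0∞} {a e : ℝ≥0∞}
    (h : a ≤ ⨆ m, b m) (ha : a ≠ ∞) (he : e ≠ 0) : ∃ m, a ≤ b m + e := by
  rcases eq_or_ne a 0 with rfl | ha0
  · exact ⟨Classical.arbitrary ι, zero_le⟩
  · have h1 : a - e < ⨆ m, b m := lt_of_lt_of_le (ENNReal.sub_lt_self ha ha0 he) h
    obtain ⟨m, hm⟩ := lt_iSup_iff.1 h1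
    exact ⟨m, tsub_le_iff_right.1 hm.le⟩

lemma sierpinski {X : Type} [MeasurableSpace X] [StandardBorelSpace X]
    (μ : Measure X) [IsFiniteMeasure μ] [NullSingletonClass μ] {S : Set X} (hS : MeasurableSet S)
    {r : ℝ≥0∞} (hr : r ≤ μ S) : ∃ B, B ⊆ S ∧ MeasurableSet B ∧ μ B = r := by
  rcases eq_or_ne r 0 with rfl | hr0
  · exact ⟨∅, empty_subset _, MeasurableSet.empty, measure_empty⟩
  rcases hr.lt_or_eq with hrlt | rfl
  swap
  · exact ⟨S, subset_rfl, hS, rfl⟩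
  obtain ⟨f, hf⟩ := exists_measurableEmbedding_real X
  set g : ℝ → ℝ≥0∞ := fun t => μ (S ∩ f ⁻¹' (Iic t)) with hg
  have hmeas : ∀ t, MeasurableSet (S ∩ f ⁻¹' (Iic t)) :=
    fun t => hS.inter (hf.measurable measurableSet_Iic)
  have hmono : Monotone g := fun a b hab =>
    measure_mono (inter_subset_inter_right _ (preimage_mono (Iic_subset_Iic.2 hab)))
  have hpt : ∀ t : ℝ, μ (S ∩ f ⁻¹' {t}) = 0 := by
    intro t
    have hsub : (f ⁻¹' {t}).Subsingleton := fun a ha b hb => hf.injective (ha.trans hb.symm)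
    exact measure_mono_null inter_subset_right (hsub.measure_zero μ)
  have hfrac : ∀ a b : ℕ, a ≤ b → (1:ℝ) / (b + 1) ≤ 1 / (a + 1) := by
    intro a b hab
    apply one_div_le_one_div_of_le (by positivity)
    exact_mod_cast by omega
  -- right continuity
  have hright : ∀ t : ℝ, (⨅ n : ℕ, g (t + 1 / (n + 1))) = g t := by
    intro t
    have hanti : Antitone fun n : ℕ => S ∩ f ⁻¹' (Iic (t + 1 / (n + 1))) := by
      intro a b hab
      refine inter_subset_inter_right _ (preimage_mono (Iic_subset_Iic.2 ?_))
      have := hfrac a b hab; linarith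
    have h2 := hanti.measure_iInter (μ := μ)
      (fun n => (hmeas _).nullMeasurableSet) ⟨0, measure_ne_top _ _⟩
    have hseteq : (⋂ n : ℕ, S ∩ f ⁻¹' (Iic (t + 1 / (n + 1)))) = S ∩ f ⁻¹' (Iic t) := by
      ext x
      simp only [mem_iInter, mem_inter_iff, mem_preimage, mem_Iic]
      constructor
      · intro h
        refine ⟨(h 0).1, ?_⟩
        by_contra hx
        push_neg at hx
        obtain ⟨n, hn⟩ := exists_nat_one_div_lt (sub_pos.2 hx)
        have := (h n).2
        push_cast at hn ⊢
        linarith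
      · intro h n
        have h1 : (0:ℝ) < 1 / ((n:ℝ) + 1) := by positivity
        exact ⟨h.1, by linarith [h.2]⟩
    rw [hseteq] at h2
    exact h2.symm
  -- left bound
  have hleft : ∀ t : ℝ, g t ≤ ⨆ n : ℕ, g (t - 1 / (n + 1)) := by
    intro t
    have hmon : Monotone fun n : ℕ => S ∩ f ⁻¹' (Iic (t - 1 / (n + 1))) := by
      intro a b hab
      refine inter_subset_inter_right _ (preimage_mono (Iic_subset_Iic.2 ?_))
      have := hfrac a b hab; linarith
    have h2 := hmon.measure_iUnion (μ := μ)
    have hseteq : (⋃ n : ℕ, S ∩ f ⁻¹' (Iic (t - 1 / (n + 1)))) = S ∩ f ⁻¹' (Iio t) := by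
      ext x
      simp only [mem_iUnion, mem_inter_iff, mem_preimage, mem_Iic, mem_Iio]
      constructor
      · rintro ⟨n, hxS, hn⟩
        have h1 : (0:ℝ) < 1 / ((n:ℝ) + 1) := by positivity
        exact ⟨hxS, by linarith⟩
      · rintro ⟨hxS, h⟩
        obtain ⟨n, hn⟩ := exists_nat_one_div_lt (sub_pos.2 h)
        refine ⟨n, hxS, ?_⟩
        push_cast at hn ⊢
        linarith
    rw [hseteq] at h2
    calc g t ≤ μ (S ∩ f ⁻¹' (Iio t)) + μ (S ∩ f ⁻¹' {t}) := by
          refine le_trans (measure_mono ?_) (measure_union_le _ _)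
          intro x hx
          rcases lt_or_eq_of_le (show f x ≤ t from hx.2) with h' | h'
          · exact Or.inl ⟨hx.1, h'⟩
          · exact Or.inr ⟨hx.1, h'⟩
      _ = μ (S ∩ f ⁻¹' (Iio t)) := by rw [hpt, add_zero]
      _ ≤ ⨆ n : ℕ, g (t - 1 / (n + 1)) := h2.le
  -- the candidate set A
  set A : Set ℝ := {t | r ≤ g t} with hA
  have hAne : A.Nonempty := by
    have hmon : Monotone fun n : ℕ => S ∩ f ⁻¹' (Iic (n : ℝ)) := fun a b hab =>
      inter_subset_inter_right _ (preimage_mono (Iic_subset_Iic.2 (by exact_mod_cast hab)))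
    have h2 := hmon.measure_iUnion (μ := μ)
    have hseteq : (⋃ n : ℕ, S ∩ f ⁻¹' (Iic (n : ℝ))) = S := by
      rw [← inter_iUnion, ← preimage_iUnion]
      have : (⋃ n : ℕ, Iic ((n : ℝ))) = univ := by
        ext x; simp only [mem_iUnion, mem_Iic, mem_univ, iff_true]
        exact exists_nat_ge x
      rw [this, preimage_univ, inter_univ]
    rw [hseteq] at h2
    obtain ⟨n, hn⟩ := lt_iSup_iff.1 (h2 ▸ hrlt)
    exact ⟨n, hn.le⟩
  have hAbdd : BddBelow A := by
    have hanti : Antitone fun n : ℕ => S ∩ f ⁻¹' (Iic (-(n:ℝ))) := by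
      intro a b hab
      refine inter_subset_inter_right _ (preimage_mono (Iic_subset_Iic.2 ?_))
      simp only [neg_le_neg_iff]
      exact_mod_cast hab
    have h2 := hanti.measure_iInter (μ := μ)
      (fun n => (hmeas _).nullMeasurableSet) ⟨0, measure_ne_top _ _⟩
    have hseteq : (⋂ n : ℕ, S ∩ f ⁻¹' (Iic (-(n:ℝ)))) = ∅ := by
      ext x
      simp only [mem_iInter, mem_inter_iff, mem_preimage, mem_Iic, mem_empty_iff_false,
        iff_false, not_forall]
      obtain ⟨n, hn⟩ := exists_nat_ge (-(f x) + 1)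
      exact ⟨n, fun h => by linarith [h.2]⟩
    rw [hseteq, measure_empty] at h2
    have : ∃ n : ℕ, g (-(n:ℝ)) < r := by
      have := h2.symm ▸ (pos_iff_ne_zero.2 hr0)
      exact iInf_lt_iff.1 this
    obtain ⟨n, hn⟩ := this
    refine ⟨-(n:ℝ), fun t ht => ?_⟩
    by_contra hlt
    push_neg at hlt
    exact absurd (le_trans ht (hmono hlt.le)) (not_le.2 hn)
  set t₀ := sInf A with ht₀
  have hge : r ≤ g t₀ := by
    rw [← hright t₀]
    refine le_iInf fun n => ?_
    have h1 : t₀ < t₀ + 1 / ((n:ℝ) + 1) := by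
      have : (0:ℝ) < 1 / ((n:ℝ)+1) := by positivity
      linarith
    obtain ⟨a, haA, ha⟩ := exists_lt_of_csInf_lt hAne h1
    exact le_trans haA (hmono ha.le)
  have hle : g t₀ ≤ r := by
    refine le_trans (hleft t₀) (iSup_le fun n => ?_)
    have h1 : t₀ - 1 / ((n:ℝ) + 1) < t₀ := by
      have : (0:ℝ) < 1 / ((n:ℝ)+1) := by positivity
      linarith
    by_contra hgt
    push_neg at hgt
    exact absurd (csInf_le hAbdd (hgt.le : r ≤ g _)) (not_le.2 h1)
  exact ⟨S ∩ f ⁻¹' (Iic t₀), inter_subset_left, hmeas t₀, le_antisymm hle hge⟩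

lemma equalSplit {X : Type} [MeasurableSpace X] [StandardBorelSpace X]
    (μ : Measure X) [IsFiniteMeasure μ] [NullSingletonClass μ] :
    ∀ (n : ℕ) {S : Set X}, MeasurableSet S →
    ∃ F : Fin (n+1) → Set X, (∀ r, MeasurableSet (F r)) ∧ (∀ r, F r ⊆ S) ∧
      Pairwise (Function.onFun Disjoint F) ∧ (⋃ r, F r) = S ∧
      ∀ r, μ (F r) = μ S / (n+1) := by
  intro n
  induction n with
  | zero =>
    intro S hS
    refine ⟨fun _ => S, fun _ => hS, fun _ => subset_rfl, ?_, ?_, fun _ => by simp⟩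
    · intro i j hij
      exact absurd (Fin.ext (by omega)) hij
    · exact iUnion_const S
  | succ n ih =>
    intro S hS
    have h2ne0 : ((n:ℝ≥0∞) + 2) ≠ 0 := by simp
    have h2netop : ((n:ℝ≥0∞) + 2) ≠ ∞ := by
      simp [ENNReal.add_eq_top, ENNReal.natCast_ne_top]
    have hdiv : μ S / ((n:ℝ≥0∞) + 2) ≤ μ S := by
      rw [div_eq_mul_inv]
      calc μ S * ((n:ℝ≥0∞) + 2)⁻¹ ≤ μ S * 1 :=
            mul_le_mul_right (ENNReal.inv_le_one.2 (le_trans one_le_two le_add_self)) _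
        _ = μ S := mul_one _
    obtain ⟨S₁, hS₁sub, hS₁meas, hS₁⟩ := sierpinski μ hS hdiv
    obtain ⟨F', hF'meas, hF'sub, hF'dis, hF'union, hF'⟩ := ih (hS.diff hS₁meas)
    have harith : μ (S \ S₁) / (n + 1) = μ S / ((n:ℝ≥0∞) + 2) := by
      set a := μ S / ((n:ℝ≥0∞) + 2) with ha
      have hb_ne_top : a ≠ ∞ := ne_top_of_le_ne_top (measure_ne_top μ S) hdiv
      have hdiff : μ (S \ S₁) = μ S - a := by
        rw [measure_diff hS₁sub hS₁meas.nullMeasurableSet (measure_ne_top μ _), hS₁]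
      have hcancel : a * ((n:ℝ≥0∞) + 2) = μ S := ENNReal.div_mul_cancel h2ne0 h2netop
      have hsplit : μ S = a * (n + 1) + a := by rw [← hcancel]; ring
      have h1ne0 : ((n:ℝ≥0∞) + 1) ≠ 0 := by simp
      have h1netop : ((n:ℝ≥0∞) + 1) ≠ ∞ := by
        simp [ENNReal.add_eq_top, ENNReal.natCast_ne_top]
      rw [hdiff, hsplit, ENNReal.add_sub_cancel_right hb_ne_top,
        mul_div_assoc, ENNReal.div_self h1ne0 h1netop, mul_one]
    refine ⟨Fin.cons S₁ F', ?_, ?_, ?_, ?_, ?_⟩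
    · intro r
      induction r using Fin.cases with
      | zero => exact hS₁meas
      | succ i => exact hF'meas i
    · intro r
      induction r using Fin.cases with
      | zero => exact hS₁sub
      | succ i => exact (hF'sub i).trans diff_subset
    · intro i j hij
      induction i using Fin.cases with
      | zero =>
        induction j using Fin.cases with
        | zero => exact absurd rfl hij
        | succ j =>
          simp only [Function.onFun, Fin.cons_zero, Fin.cons_succ]
          exact Disjoint.mono_right (hF'sub j) disjoint_sdiff_right
      | succ i =>
        induction j using Fin.cases with
        | zero =>
          simp only [Function.onFun, Fin.cons_zero, Fin.cons_succ]
          exact (Disjoint.mono_right (hF'sub i) disjoint_sdiff_right).symm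
        | succ j =>
          simp only [Function.onFun, Fin.cons_succ]
          exact hF'dis (fun h => hij (by rw [h]))
    · ext x
      simp only [mem_iUnion]
      constructor
      · rintro ⟨r, hr⟩
        induction r using Fin.cases with
        | zero => exact hS₁sub hr
        | succ i => exact diff_subset (hF'sub i hr)
      · intro hx
        by_cases hx1 : x ∈ S₁
        · exact ⟨0, hx1⟩
        · have : x ∈ ⋃ i, F' i := hF'union.symm ▸ ⟨hx, hx1⟩
          obtain ⟨i, hi⟩ := mem_iUnion.1 this
          exact ⟨i.succ, hi⟩
    · intro r
      induction r using Fin.cases with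
      | zero =>
        rw [Fin.cons_zero, hS₁]
        congr 1
        push_cast
        ring
      | succ i =>
        rw [Fin.cons_succ, hF' i, harith]
        congr 1
        push_cast
        ring

lemma approxSplit {X : Type} [MeasurableSpace X] [StandardBorelSpace X]
    (μ : Measure X) [IsProbabilityMeasure μ] [NullSingletonClass μ]
    {ι : Type} [Fintype ι] (ρ : ι → Measure X) [∀ i, IsFiniteMeasure (ρ i)]
    (hac : ∀ i, ρ i ≪ μ) {S : Set X} (hS : MeasurableSet S) (n : ℕ)
    {η : ℝ≥0∞} (hη : η ≠ 0) :
    ∃ F : Fin (n+1) → Set X, (∀ r, MeasurableSet (F r)) ∧ (∀ r, F r ⊆ S) ∧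
      Pairwise (Function.onFun Disjoint F) ∧ (⋃ r, F r) = S ∧
      ∀ i r, ρ i (F r) ≤ ρ i S / (n+1) + η ∧ ρ i S / (n+1) ≤ ρ i (F r) + η := by
  classical
  set f : ι → X → ℝ≥0∞ := fun i => (ρ i).rnDeriv μ with hf
  have hfm : ∀ i, Measurable (f i) := fun i => Measure.measurable_rnDeriv _ _
  have hρapp : ∀ (i) (A : Set X), MeasurableSet A → ρ i A = ∫⁻ x in A, f i x ∂μ := by
    intro i A hA
    conv_lhs => rw [← Measure.withDensity_rnDeriv_eq (ρ i) μ (hac i)]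
    rw [withDensity_apply _ hA]
  -- choose the approximation level m
  have hchoice : ∀ i : ι, ∃ m : ℕ,
      ∫⁻ x in S, f i x ∂μ ≤ (∫⁻ x in S, SimpleFunc.eapprox (f i) m x ∂μ) + η := by
    intro i
    have hsup : (⨆ m, ∫⁻ x in S, SimpleFunc.eapprox (f i) m x ∂μ) = ∫⁻ x in S, f i x ∂μ := by
      rw [← lintegral_iSup (fun m => (SimpleFunc.eapprox (f i) m).measurable)
        (fun a b hab x => SimpleFunc.monotone_eapprox (f i) hab x)]
      congr 1
      ext x
      exact SimpleFunc.iSup_eapprox_apply (hfm i) x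
    have hfin : ∫⁻ x in S, f i x ∂μ ≠ ∞ := by
      rw [← hρapp i S hS]; exact measure_ne_top _ _
    exact aux_le_iSup_add hsup.ge hfin hη
  choose m₀ hm₀ using hchoice
  set m : ℕ := Finset.univ.sup m₀ with hm
  set g : ι → X → ℝ≥0∞ := fun i x => SimpleFunc.eapprox (f i) m x with hgdef
  have hgm : ∀ i, Measurable (g i) := fun i => (SimpleFunc.eapprox (f i) m).measurable
  have hgle : ∀ i x, g i x ≤ f i x := by
    intro i x
    rw [← SimpleFunc.iSup_eapprox_apply (hfm i) x]
    exact le_iSup (fun k => SimpleFunc.eapprox (f i) k x) m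
  have herr : ∀ i, ∫⁻ x in S, f i x ∂μ ≤ (∫⁻ x in S, g i x ∂μ) + η := by
    intro i
    refine le_trans (hm₀ i) (add_le_add_left ?_ η)
    exact lintegral_mono fun x => SimpleFunc.monotone_eapprox (f i)
      (Finset.le_sup (Finset.mem_univ i)) x
  set ν : ι → Measure X := fun i => μ.withDensity (g i) with hν
  have hνapp : ∀ (i) (A : Set X), MeasurableSet A → ν i A = ∫⁻ x in A, g i x ∂μ :=
    fun i A hA => withDensity_apply _ hA
  have hνle : ∀ (i) (A : Set X), MeasurableSet A → ν i A ≤ ρ i A := by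
    intro i A hA
    rw [hνapp i A hA, hρapp i A hA]
    exact lintegral_mono fun x => hgle i x
  -- subtraction bound : ∫_S (f - g) ≤ η
  have hsub : ∀ i, (∫⁻ x in S, (f i x - g i x) ∂μ) ≤ η := by
    intro i
    have hadd : (∫⁻ x in S, (f i x - g i x) ∂μ) + (∫⁻ x in S, g i x ∂μ)
        = ∫⁻ x in S, f i x ∂μ := by
      rw [← lintegral_add_right _ (hgm i)]
      refine lintegral_congr fun x => ?_
      exact tsub_add_cancel_of_le (hgle i x)
    have hgfin : (∫⁻ x in S, g i x ∂μ) ≠ ∞ := by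
      refine ne_top_of_le_ne_top (?_ : (∫⁻ x in S, f i x ∂μ) ≠ ∞)
        (lintegral_mono fun x => hgle i x)
      rw [← hρapp i S hS]; exact measure_ne_top _ _
    have h2 : (∫⁻ x in S, g i x ∂μ) + (∫⁻ x in S, (f i x - g i x) ∂μ)
        ≤ (∫⁻ x in S, g i x ∂μ) + η := by
      rw [add_comm (∫⁻ x in S, g i x ∂μ) (∫⁻ x in S, (f i x - g i x) ∂μ), hadd]
      exact herr i
    exact (ENNReal.add_le_add_iff_left hgfin).1 h2
  have hρle : ∀ (i) (A : Set X), A ⊆ S → MeasurableSet A → ρ i A ≤ ν i A + η := by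
    intro i A hAS hA
    rw [hρapp i A hA, hνapp i A hA]
    calc (∫⁻ x in A, f i x ∂μ)
        = ∫⁻ x in A, (g i x + (f i x - g i x)) ∂μ := by
          refine lintegral_congr fun x => ?_
          rw [add_comm, tsub_add_cancel_of_le (hgle i x)]
      _ = (∫⁻ x in A, g i x ∂μ) + ∫⁻ x in A, (f i x - g i x) ∂μ :=
          lintegral_add_left (hgm i) _
      _ ≤ (∫⁻ x in A, g i x ∂μ) + ∫⁻ x in S, (f i x - g i x) ∂μ := by
          gcongr
      _ ≤ (∫⁻ x in A, g i x ∂μ) + η := by gcongr; exact hsub i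
  -- the common refinement cells
  set G : X → ι → ℝ≥0∞ := fun x i => g i x with hG
  have hGfin : (Set.range G).Finite := by
    refine Set.Finite.subset (Set.Finite.pi (fun i => (SimpleFunc.eapprox (f i) m).finite_range)) ?_
    rintro _ ⟨x, rfl⟩
    intro i _
    exact ⟨x, rfl⟩
  set V := hGfin.toFinset with hV
  set Q : (ι → ℝ≥0∞) → Set X := fun v => S ∩ G ⁻¹' {v} with hQ
  have hQmeas : ∀ v, MeasurableSet (Q v) := by
    intro v
    have : G ⁻¹' {v} = ⋂ i, (g i) ⁻¹' {v i} := by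
      ext x
      simp only [mem_preimage, mem_singleton_iff, mem_iInter, funext_iff]
      exact Iff.rfl
    exact hS.inter (this ▸ MeasurableSet.iInter fun i => (hgm i) (measurableSet_singleton _))
  have hQdis : ∀ v w, v ≠ w → Disjoint (Q v) (Q w) := by
    intro v w hvw
    rw [Set.disjoint_left]
    rintro x ⟨_, hxv⟩ ⟨_, hxw⟩
    exact hvw ((mem_singleton_iff.1 hxv).symm.trans (mem_singleton_iff.1 hxw))
  have hQconst : ∀ v, ∀ x ∈ Q v, ∀ i, g i x = v i := by
    rintro v x ⟨_, hxv⟩ i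
    rw [mem_preimage, mem_singleton_iff] at hxv
    rw [← hxv]
  choose pc pcmeas pcsub pcdis pcunion pcsize using fun v => equalSplit μ n (hQmeas v)
  set F : Fin (n+1) → Set X := fun r => ⋃ v ∈ V, pc v r with hF
  have hFmeas : ∀ r, MeasurableSet (F r) :=
    fun r => MeasurableSet.biUnion V.countable_toSet (fun v _ => pcmeas v r)
  have hFsubQ : ∀ r v, pc v r ⊆ Q v := fun r v => pcsub v r
  have hFsub : ∀ r, F r ⊆ S := by
    intro r
    refine Set.iUnion₂_subset fun v _ => (pcsub v r).trans inter_subset_left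
  have hSunion : (⋃ v ∈ V, Q v) = S := by
    apply Set.Subset.antisymm
    · exact Set.iUnion₂_subset fun v _ => inter_subset_left
    · intro x hx
      exact Set.mem_biUnion (hGfin.mem_toFinset.2 ⟨x, rfl⟩) (⟨hx, rfl⟩ : x ∈ Q (G x))
  have hFdis : Pairwise (Function.onFun Disjoint F) := by
    intro r r' hrr
    rw [Function.onFun, Set.disjoint_left]
    intro x hx hx'
    obtain ⟨v, hvV, hxv⟩ := Set.mem_iUnion₂.1 hx
    obtain ⟨w, hwV, hxw⟩ := Set.mem_iUnion₂.1 hx'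
    rcases eq_or_ne v w with rfl | hvw
    · exact Set.disjoint_left.1 (pcdis v hrr) hxv hxw
    · exact Set.disjoint_left.1 (hQdis v w hvw) (pcsub v r hxv) (pcsub w r' hxw)
  have hFunion : (⋃ r, F r) = S := by
    apply Set.Subset.antisymm
    · exact Set.iUnion_subset hFsub
    · intro x hx
      have hGx : G x ∈ V := hGfin.mem_toFinset.2 ⟨x, rfl⟩
      have : x ∈ Q (G x) := ⟨hx, rfl⟩
      rw [← pcunion (G x)] at this
      obtain ⟨r, hr⟩ := mem_iUnion.1 this
      exact mem_iUnion.2 ⟨r, Set.mem_biUnion hGx hr⟩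
  -- the measure computation for ν
  have hνconst : ∀ (i) (v) (A : Set X), A ⊆ Q v → MeasurableSet A → ν i A = v i * μ A := by
    intro i v A hAQ hA
    rw [hνapp i A hA]
    rw [setLIntegral_congr_fun hA (fun x hx => hQconst v x (hAQ hx) i)]
    simp [lintegral_const]
  have hνF : ∀ i r, ν i (F r) = ν i S / (n+1) := by
    intro i r
    have h1 : ν i (F r) = ∑ v ∈ V, ν i (pc v r) := by
      rw [hF]
      refine measure_biUnion_finset ?_ (fun v _ => pcmeas v r)
      intro v hv w hw hvw
      exact Disjoint.mono (pcsub v r) (pcsub w r) (hQdis v w hvw)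
    have h2 : ν i S = ∑ v ∈ V, ν i (Q v) := by
      rw [← hSunion]
      refine measure_biUnion_finset ?_ (fun v _ => hQmeas v)
      intro v hv w hw hvw
      exact hQdis v w hvw
    rw [h1, h2, div_eq_mul_inv, Finset.sum_mul]
    refine Finset.sum_congr rfl fun v hv => ?_
    rw [hνconst i v (pc v r) (pcsub v r) (pcmeas v r),
        hνconst i v (Q v) subset_rfl (hQmeas v), pcsize v r, div_eq_mul_inv, mul_assoc]
  refine ⟨F, hFmeas, hFsub, hFdis, hFunion, fun i r => ⟨?_, ?_⟩⟩
  · calc ρ i (F r) ≤ ν i (F r) + η := hρle i (F r) (hFsub r) (hFmeas r)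
      _ = ν i S / (n+1) + η := by rw [hνF i r]
      _ ≤ ρ i S / (n+1) + η := by
          gcongr ?_ / _ + _
          exact hνle i S hS
  · have hdivle : η / ((n:ℝ≥0∞)+1) ≤ η := by
      rw [div_eq_mul_inv]
      calc η * ((n:ℝ≥0∞) + 1)⁻¹ ≤ η * 1 :=
            mul_le_mul_right (ENNReal.inv_le_one.2 le_add_self) _
        _ = η := mul_one _
    calc ρ i S / ((n:ℝ≥0∞)+1) ≤ (ν i S + η) / ((n:ℝ≥0∞)+1) := by
          gcongr
          exact hρle i S subset_rfl hS
      _ = ν i S / ((n:ℝ≥0∞)+1) + η / ((n:ℝ≥0∞)+1) := ENNReal.add_div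
      _ ≤ ν i (F r) + η := by
          rw [← hνF i r]
          gcongr
      _ ≤ ρ i (F r) + η := by
          gcongr ?_ + _
          exact hνle i (F r) (hFmeas r)

lemma ennreal_nat_ne_top (n : ℕ) : ((n:ℝ≥0∞)+1) ≠ ∞ := by
  simp [ENNReal.add_eq_top, ENNReal.natCast_ne_top]

lemma ennreal_nat_cancel (n : ℕ) (y : ℝ≥0∞) : ((n:ℝ≥0∞)+1) * y / ((n:ℝ≥0∞)+1) = y := by
  rw [mul_comm, mul_div_assoc, ENNReal.div_self (by simp) (ennreal_nat_ne_top n), mul_one]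

lemma ennreal_div_nat_le (n : ℕ) (z : ℝ≥0∞) : z / ((n:ℝ≥0∞)+1) ≤ z := by
  rw [div_eq_mul_inv]
  calc z * ((n:ℝ≥0∞)+1)⁻¹ ≤ z * 1 := mul_le_mul_right (ENNReal.inv_le_one.2 le_add_self) _
    _ = z := mul_one _

lemma measure_fiber_sum {X C : Type} [MeasurableSpace X] [Fintype C] (μ : Measure X)
    (P : X → C) (hP : ∀ c, MeasurableSet (P ⁻¹' {c})) {S : Set X} (hS : MeasurableSet S) :
    μ S = ∑ c, μ (S ∩ P ⁻¹' {c}) := by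
  classical
  have hset : S = ⋃ c ∈ (Finset.univ : Finset C), S ∩ P ⁻¹' {c} := by
    ext x
    simp only [mem_iUnion, mem_inter_iff, mem_preimage, mem_singleton_iff, exists_prop]
    exact ⟨fun hx => ⟨P x, Finset.mem_univ _, hx, rfl⟩, fun ⟨c, _, hx, _⟩ => hx⟩
  conv_lhs => rw [hset]
  refine measure_biUnion_finset ?_ (fun c _ => hS.inter (hP c))
  intro a _ b _ hab
  rw [Function.onFun, Set.disjoint_left]
  rintro x ⟨_, hxa⟩ ⟨_, hxb⟩
  exact hab ((mem_singleton_iff.1 hxa).symm.trans (mem_singleton_iff.1 hxb))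

lemma approxTower {X : Type} [MeasurableSpace X] [StandardBorelSpace X]
    (μ : Measure X) [IsProbabilityMeasure μ] [NullSingletonClass μ]
    (T : X → X) (hTm : Measurable T) (hT : MeasurePreserving T μ μ) (hErg : Ergodic T μ)
    {C : Type} [Fintype C] (P : X → C) (hP : ∀ c, MeasurableSet (P ⁻¹' {c}))
    (N : ℕ) {δ : ℝ} (hδ : 0 < δ) :
    ∃ B : Set X, MeasurableSet B ∧
      (∀ i j : ℕ, i < j → j ≤ N → Disjoint (T^[i] ⁻¹' B) (T^[j] ⁻¹' B)) ∧
      (1 : ℝ≥0∞) ≤ μ (⋃ j : Fin (N+1), (T^[(j:ℕ)]) ⁻¹' B) + ENNReal.ofReal δ ∧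
      ∀ c : C, μ B * μ (P ⁻¹' {c}) ≤ μ (B ∩ P ⁻¹' {c}) + ENNReal.ofReal δ := by
  classical
  -- choose the small set E
  set mE : ℝ := min (δ / (8 * (N + 1))) 1 with hmE
  have hmEpos : 0 < mE := by
    apply lt_min
    · positivity
    · norm_num
  have hmEle : ENNReal.ofReal mE ≤ μ univ := by
    rw [measure_univ]
    exact ENNReal.ofReal_le_one.2 (min_le_right _ _)
  obtain ⟨E, -, hEmeas, hEμ⟩ := sierpinski μ MeasurableSet.univ hmEle
  have hEpos : 0 < μ E := by rw [hEμ]; exact ENNReal.ofReal_pos.2 hmEpos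
  -- the hitting structure
  set W : ℕ → Set X := fun k => T^[k] ⁻¹' E with hW
  have hWmeas : ∀ k, MeasurableSet (W k) := fun k => (hTm.iterate k) hEmeas
  have hWμ : ∀ k, μ (W k) = μ E := fun k => (hT.iterate k).measure_preimage
    hEmeas.nullMeasurableSet
  set D : ℕ → Set X := fun k => W k \ ⋃ i < k, W i with hD
  have hDmeas : ∀ k, MeasurableSet (D k) :=
    fun k => (hWmeas k).diff
      (MeasurableSet.iUnion fun i => MeasurableSet.iUnion fun _ => hWmeas i)
  have hDdis' : ∀ k k' : ℕ, k < k' → Disjoint (D k) (D k') := by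
    intro k k' h
    rw [Set.disjoint_left]
    rintro x ⟨hxk, -⟩ ⟨-, hxk'⟩
    exact hxk' (Set.mem_iUnion₂.2 ⟨k, h, hxk⟩)
  have hDdis : ∀ k k' : ℕ, k ≠ k' → Disjoint (D k) (D k') := by
    intro k k' hkk
    rcases Nat.lt_or_ge k k' with h | h
    · exact hDdis' k k' h
    · exact (hDdis' k' k (by omega)).symm
  have hDsubW : ∀ k, D k ⊆ W k := fun k => diff_subset
  -- sweeping out
  have hU : μ (⋃ k, W k) = 1 := by
    have hsub : T ⁻¹' (⋃ k, W k) ⊆ ⋃ k, W k := by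
      rintro x hx
      obtain ⟨k, hk⟩ := mem_iUnion.1 hx
      refine mem_iUnion.2 ⟨k + 1, ?_⟩
      have : T^[k] (T x) ∈ E := hk
      rwa [← Function.iterate_succ_apply] at this
    have hmeasU : NullMeasurableSet (⋃ k, W k) μ :=
      (MeasurableSet.iUnion hWmeas).nullMeasurableSet
    rcases hErg.ae_empty_or_univ_of_preimage_ae_le hmeasU hsub.eventuallyLE with h | h
    · exfalso
      have : μ (⋃ k, W k) = 0 := by
        rw [measure_congr h, measure_empty]
      exact absurd (lt_of_lt_of_le hEpos (measure_mono (subset_iUnion W 0))) (by simp [this])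
    · rw [measure_congr h, measure_univ]
  -- choice of the cutoff R
  have hVmono : Monotone (fun R => ⋃ k ∈ Finset.Iic R, W k) := by
    intro a b hab
    exact Set.biUnion_subset_biUnion_left (fun k hk => Finset.mem_Iic.2
      (le_trans (Finset.mem_Iic.1 hk) hab))
  have hVU : (⋃ R, ⋃ k ∈ Finset.Iic R, W k) = ⋃ k, W k := by
    apply Set.Subset.antisymm
    · exact Set.iUnion_subset fun R => Set.iUnion₂_subset fun k _ => subset_iUnion W k
    · exact Set.iUnion_subset fun k => subset_trans
        (subset_biUnion_of_mem (Finset.mem_Iic.2 le_rfl))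
        (subset_iUnion (fun R => ⋃ k ∈ Finset.Iic R, W k) k)
  have hVsup : (1:ℝ≥0∞) ≤ ⨆ R : ℕ, μ (⋃ k ∈ Finset.Iic R, W k) := by
    rw [← Monotone.measure_iUnion hVmono, hVU, hU]
  obtain ⟨R₀, hR₀⟩ := aux_le_iSup_add hVsup ENNReal.one_ne_top
    ((ENNReal.ofReal_pos.2 (by linarith)).ne' : ENNReal.ofReal (δ/4) ≠ 0)
  set R : ℕ := max R₀ (2*N+2) with hR
  set V : Set X := ⋃ k ∈ Finset.Iic R, W k with hV
  have hVmeas : MeasurableSet V := MeasurableSet.biUnion (Finset.Iic R).countable_toSet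
    (fun k _ => hWmeas k)
  have hVR : (1:ℝ≥0∞) ≤ μ V + ENNReal.ofReal (δ/4) := by
    refine le_trans hR₀ (add_le_add_left (measure_mono (hVmono (le_max_left _ _))) _)
  have hRN : 2*N+2 ≤ R := le_max_right _ _
  -- the finitely many absolutely continuous measures
  set ρ : Fin (R+1) × C → Measure X := fun i =>
    Measure.map (T^[(i.1 : ℕ)]) (μ.restrict (D i.1 ∩ P ⁻¹' {i.2})) with hρ
  have hρapp : ∀ (k : Fin (R+1)) (c : C) (S : Set X), MeasurableSet S →
      ρ ⟨k, c⟩ S = μ (D k ∩ T^[(k:ℕ)] ⁻¹' S ∩ P ⁻¹' {c}) := by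
    intro k c S hS
    rw [hρ]
    rw [Measure.map_apply (hTm.iterate _) hS, Measure.restrict_apply ((hTm.iterate _) hS)]
    congr 1
    ext x
    simp only [mem_inter_iff, mem_preimage]
    tauto
  haveI hρfin : ∀ i, IsFiniteMeasure (ρ i) := by
    rintro ⟨k, c⟩
    refine ⟨?_⟩
    rw [hρapp k c univ MeasurableSet.univ]
    exact lt_of_le_of_lt (measure_mono (Set.inter_subset_left.trans Set.inter_subset_left))
      (measure_lt_top μ _)
  have hρac : ∀ i, ρ i ≪ μ := by
    rintro ⟨k, c⟩ S hS0
    obtain ⟨S', hSS', hS'meas, hS'0⟩ := exists_measurable_superset_of_null hS0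
    have h1 : ρ ⟨k, c⟩ S ≤ ρ ⟨k, c⟩ S' := measure_mono hSS'
    have h2 : ρ ⟨k, c⟩ S' = 0 := by
      rw [hρapp k c S' hS'meas]
      refine measure_mono_null (Set.inter_subset_left.trans Set.inter_subset_right) ?_
      rw [(hT.iterate (k:ℕ)).measure_preimage hS'meas.nullMeasurableSet]
      exact hS'0
    exact le_antisymm (h2 ▸ h1) (zero_le)
  -- the approximate splitting of E
  set η₀ : ℝ := δ / (4 * (R+1) * (Fintype.card C + 1)) with hη₀
  have hη₀pos : 0 < η₀ := by positivity
  obtain ⟨Ep, hEpmeas, hEpsub, hEpdis, hEpunion, hEpbound⟩ :=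
    approxSplit μ ρ hρac hEmeas N ((ENNReal.ofReal_pos.2 hη₀pos).ne' :
      ENNReal.ofReal η₀ ≠ 0)
  -- the base of the tower
  set rk : ℕ → Fin (N+1) := fun k => ⟨k % (N+1), Nat.mod_lt _ (Nat.succ_pos N)⟩ with hrk
  set K : Finset ℕ := Finset.Icc (N+1) R with hK
  set B : Set X := ⋃ k ∈ K, (D k ∩ T^[k] ⁻¹' (Ep (rk k))) with hB
  have hBmeas : MeasurableSet B := MeasurableSet.biUnion K.countable_toSet
    (fun k _ => (hDmeas k).inter ((hTm.iterate k) (hEpmeas _)))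
  -- membership characterizations
  have hmemW : ∀ (k i : ℕ) (x : X), T^[i] x ∈ W k ↔ T^[k+i] x ∈ E := by
    intro k i x
    rw [hW]
    simp only [mem_preimage]
    rw [← Function.iterate_add_apply]
  have hmemD : ∀ (k i : ℕ) (x : X), T^[i] x ∈ D k ↔
      (T^[k+i] x ∈ E ∧ ∀ m, m < k → T^[m+i] x ∉ E) := by
    intro k i x
    rw [hD]
    simp only [mem_diff, hmemW, Set.mem_iUnion, not_exists]
  have hmemB : ∀ (i : ℕ) (x : X), T^[i] x ∈ B ↔
      ∃ k, (N+1 ≤ k ∧ k ≤ R) ∧ T^[i] x ∈ D k ∧ T^[k+i] x ∈ Ep (rk k) := by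
    intro i x
    rw [hB]
    simp only [hK, Set.mem_iUnion, mem_inter_iff, mem_preimage, exists_prop, Finset.mem_Icc]
    constructor
    · rintro ⟨k, hk, hD1, hD2⟩
      exact ⟨k, hk, hD1, by rwa [Function.iterate_add_apply]⟩
    · rintro ⟨k, hk, hD1, hD2⟩
      exact ⟨k, hk, hD1, by rwa [← Function.iterate_add_apply]⟩
  -- disjointness of the tower levels
  have hdisj : ∀ i j : ℕ, i < j → j ≤ N → Disjoint (T^[i] ⁻¹' B) (T^[j] ⁻¹' B) := by
    intro i j hij hjN
    rw [Set.disjoint_left]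
    intro x hxi hxj
    rw [mem_preimage] at hxi hxj
    obtain ⟨k, ⟨hk1, hk2⟩, hDk, hEk⟩ := (hmemB i x).1 hxi
    obtain ⟨k', ⟨hk'1, hk'2⟩, hDk', hEk'⟩ := (hmemB j x).1 hxj
    have hDk1 := (hmemD k i x).1 hDk
    have hDk'1 := (hmemD k' j x).1 hDk'
    have heq : k + i = k' + j := by
      rcases Nat.lt_trichotomy (k+i) (k'+j) with h | h | h
      · have := hDk'1.2 (k + i - j) (by omega)
        rw [(by omega : (k + i - j) + j = k + i)] at this
        exact absurd (hEpsub (rk k) hEk) this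
      · exact h
      · have := hDk1.2 (k' + j - i) (by omega)
        rw [(by omega : (k' + j - i) + i = k' + j)] at this
        exact absurd (hEpsub (rk k') hEk') this
    have hne : rk k ≠ rk k' := by
      intro hrkeq
      have hmod : k % (N+1) = k' % (N+1) := congrArg Fin.val hrkeq
      have hkk' : k = k' + (j - i) := by omega
      have h1 : Nat.ModEq (N+1) (k' + (j-i)) (k' + 0) := by
        rw [Nat.add_zero, ← hkk']
        exact hmod
      have hdvd : (N+1) ∣ (j - i) :=
        (Nat.modEq_zero_iff_dvd).1 (Nat.ModEq.add_left_cancel' k' h1)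
      have := Nat.le_of_dvd (by omega) hdvd
      omega
    have hpoint' : T^[k+i] x ∈ Ep (rk k') := by rw [heq]; exact hEk'
    exact Set.disjoint_left.1 (hEpdis hne) hEk hpoint'
  -- coverage
  have hcover : V \ (⋃ k ∈ Finset.Iio (2*N+1), W k) ⊆ ⋃ j : Fin (N+1), T^[(j:ℕ)] ⁻¹' B := by
    rintro x ⟨hxV, hxlow⟩
    have hex : ∃ k, x ∈ W k := by
      obtain ⟨k, _, hk⟩ := Set.mem_iUnion₂.1 hxV
      exact ⟨k, hk⟩
    set M : ℕ := Nat.find hex with hM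
    have hMspec : x ∈ W M := Nat.find_spec hex
    have hMmin : ∀ l, l < M → x ∉ W l := fun l hl => Nat.find_min hex hl
    have hMR : M ≤ R := by
      obtain ⟨k, hkR, hk⟩ := Set.mem_iUnion₂.1 hxV
      exact le_trans (Nat.find_min' hex hk) (Finset.mem_Iic.1 hkR)
    have hMlow : 2*N+1 ≤ M := by
      by_contra h
      push_neg at h
      exact hxlow (Set.mem_biUnion (Finset.mem_Iio.2 h) hMspec)
    have hxE : T^[M] x ∈ E := hMspec
    have hxEp : ∃ r, T^[M] x ∈ Ep r := by
      have : T^[M] x ∈ ⋃ r, Ep r := hEpunion.symm ▸ hxE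
      exact mem_iUnion.1 this
    obtain ⟨r, hr⟩ := hxEp
    set i : ℕ := (M - (r:ℕ)) % (N+1) with hi
    have hiN : i ≤ N := by
      have := Nat.mod_lt (M - (r:ℕ)) (show 0 < N+1 by omega)
      omega
    set k : ℕ := M - i with hk
    have hki : k + i = M := by
      have : i ≤ M := by omega
      omega
    have hkK : N+1 ≤ k ∧ k ≤ R := by omega
    have hrkk : rk k = r := by
      apply Fin.ext
      show k % (N+1) = (r:ℕ)
      have hrM : (r:ℕ) ≤ M := by
        have := r.isLt
        omega
      have hq : (r:ℕ) + (M - (r:ℕ)) = M := by omega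
      have hmoddiv := Nat.mod_add_div (M - (r:ℕ)) (N+1)
      have hkalt : k = (r:ℕ) + (N+1) * ((M - (r:ℕ)) / (N+1)) := by omega
      rw [hkalt, Nat.add_mul_mod_self_left, Nat.mod_eq_of_lt r.isLt]
    refine mem_iUnion.2 ⟨⟨i, by omega⟩, ?_⟩
    rw [mem_preimage]
    show T^[i] x ∈ B
    refine (hmemB i x).2 ⟨k, hkK, ?_, ?_⟩
    · refine (hmemD k i x).2 ⟨?_, ?_⟩
      · rw [hki]; exact hxE
      · intro m hm
        exact hMmin (m+i) (by omega)
    · rw [hki, hrkk]; exact hr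
  -- abbreviations for the error terms
  set d4 : ℝ≥0∞ := ENNReal.ofReal (δ/4) with hd4
  set d8 : ℝ≥0∞ := ENNReal.ofReal (δ/8) with hd8
  set eta : ℝ≥0∞ := ENNReal.ofReal η₀ with heta
  -- measure of the low levels
  have hWsum : ∀ (m : ℕ), μ (⋃ k ∈ Finset.Iio m, W k) ≤ (m : ℝ≥0∞) * μ E := by
    intro m
    calc μ (⋃ k ∈ Finset.Iio m, W k) ≤ ∑ k ∈ Finset.Iio m, μ (W k) :=
          measure_biUnion_finset_le _ _
      _ = (m : ℝ≥0∞) * μ E := by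
          rw [Finset.sum_congr rfl (fun k _ => hWμ k), Finset.sum_const, Nat.card_Iio,
            nsmul_eq_mul]
  have hmE_mul : ∀ m : ℕ, (m : ℝ≥0∞) * μ E = ENNReal.ofReal (m * mE) := by
    intro m
    rw [hEμ, ENNReal.ofReal_mul (Nat.cast_nonneg m), ENNReal.ofReal_natCast]
  have hmEbound : mE * (8 * ((N:ℝ) + 1)) ≤ δ := by
    have h1 : mE ≤ δ / (8 * ((N:ℝ) + 1)) := min_le_left _ _
    have h2 : (0:ℝ) < 8 * ((N:ℝ) + 1) := by positivity
    calc mE * (8 * ((N:ℝ) + 1)) ≤ (δ / (8 * ((N:ℝ) + 1))) * (8 * ((N:ℝ) + 1)) := by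
          exact mul_le_mul_of_nonneg_right h1 h2.le
      _ = δ := div_mul_cancel₀ δ h2.ne'
  have hlowμ : μ (⋃ k ∈ Finset.Iio (2*N+1), W k) ≤ d4 := by
    refine le_trans (hWsum (2*N+1)) ?_
    rw [hmE_mul, hd4]
    apply ENNReal.ofReal_le_ofReal
    push_cast
    nlinarith [hmEpos.le]
  have hNμ : μ (⋃ k ∈ Finset.Iio (N+1), W k) ≤ d8 := by
    refine le_trans (hWsum (N+1)) ?_
    rw [hmE_mul, hd8]
    apply ENNReal.ofReal_le_ofReal
    push_cast
    nlinarith [hmEpos.le]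
  -- conclusion: coverage
  have hcovμ : (1:ℝ≥0∞) ≤ μ (⋃ j : Fin (N+1), T^[(j:ℕ)] ⁻¹' B) + ENNReal.ofReal δ := by
    have h1 : μ V ≤ μ (⋃ j : Fin (N+1), T^[(j:ℕ)] ⁻¹' B) + d4 := by
      calc μ V ≤ μ ((V \ (⋃ k ∈ Finset.Iio (2*N+1), W k)) ∪ (⋃ k ∈ Finset.Iio (2*N+1), W k)) :=
            measure_mono (fun x hx => by
              by_cases hxl : x ∈ ⋃ k ∈ Finset.Iio (2*N+1), W k
              · exact Or.inr hxl
              · exact Or.inl ⟨hx, hxl⟩)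
        _ ≤ μ (V \ (⋃ k ∈ Finset.Iio (2*N+1), W k)) + μ (⋃ k ∈ Finset.Iio (2*N+1), W k) :=
            measure_union_le _ _
        _ ≤ μ (⋃ j : Fin (N+1), T^[(j:ℕ)] ⁻¹' B) + d4 :=
            add_le_add (measure_mono hcover) hlowμ
    calc (1:ℝ≥0∞) ≤ μ V + d4 := hVR
      _ ≤ (μ (⋃ j : Fin (N+1), T^[(j:ℕ)] ⁻¹' B) + d4) + d4 := add_le_add_left h1 _
      _ ≤ μ (⋃ j : Fin (N+1), T^[(j:ℕ)] ⁻¹' B) + ENNReal.ofReal δ := by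
          rw [add_assoc]
          refine add_le_add_right ?_ _
          rw [hd4, ← ENNReal.ofReal_add (by linarith) (by linarith)]
          exact ENNReal.ofReal_le_ofReal (by linarith)
  -- the ρ-evaluations
  have hkfin : ∀ k ∈ K, k < R + 1 := fun k hk => by
    have := (Finset.mem_Icc.1 hk).2; omega
  have hCmeas : ∀ k, MeasurableSet (D k ∩ T^[k] ⁻¹' (Ep (rk k))) :=
    fun k => (hDmeas k).inter ((hTm.iterate k) (hEpmeas _))
  have hρEp : ∀ k (hk : k ∈ K) (c : C),
      μ (D k ∩ T^[k] ⁻¹' (Ep (rk k)) ∩ P ⁻¹' {c}) = ρ ⟨⟨k, hkfin k hk⟩, c⟩ (Ep (rk k)) := by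
    intro k hk c
    rw [hρapp ⟨k, hkfin k hk⟩ c (Ep (rk k)) (hEpmeas _)]
  have hρE : ∀ k (hk : k ∈ K) (c : C),
      μ (D k ∩ P ⁻¹' {c}) = ρ ⟨⟨k, hkfin k hk⟩, c⟩ E := by
    intro k hk c
    rw [hρapp ⟨k, hkfin k hk⟩ c E hEmeas]
    congr 1
    rw [Set.inter_eq_self_of_subset_left (hDsubW k)]
  -- counting bound : |K| * (card C) * eta ≤ d4  and |K| * eta ≤ d4
  have hcount : ∀ m : ℕ, m ≤ (R+1) * (Fintype.card C + 1) → (m : ℝ≥0∞) * eta ≤ d4 := by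
    intro m hm
    rw [heta, hd4, ← ENNReal.ofReal_natCast m, ← ENNReal.ofReal_mul (Nat.cast_nonneg m)]
    apply ENNReal.ofReal_le_ofReal
    have h2 : (m:ℝ) ≤ ((R:ℝ)+1) * ((Fintype.card C : ℝ) + 1) := by exact_mod_cast hm
    have h3 : (0:ℝ) < 4 * ((R:ℝ)+1) * ((Fintype.card C:ℝ)+1) := by positivity
    rw [hη₀, mul_div_assoc']
    rw [div_le_div_iff₀ h3 (by norm_num : (0:ℝ) < 4)]
    nlinarith [hδ.le, h2]
  -- expansion of μ B and μ (B ∩ P⁻¹ c)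
  have hBdisK : (↑K : Set ℕ).PairwiseDisjoint (fun k => D k ∩ T^[k] ⁻¹' (Ep (rk k))) :=
    fun a _ b _ hab => Disjoint.mono inter_subset_left inter_subset_left (hDdis a b hab)
  have hμBsum : μ B = ∑ k ∈ K, μ (D k ∩ T^[k] ⁻¹' (Ep (rk k))) := by
    rw [hB]
    exact measure_biUnion_finset hBdisK (fun k _ => hCmeas k)
  have hμBPsum : ∀ c, μ (B ∩ P ⁻¹' {c})
      = ∑ k ∈ K, μ (D k ∩ T^[k] ⁻¹' (Ep (rk k)) ∩ P ⁻¹' {c}) := by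
    intro c
    have hseteq : B ∩ P ⁻¹' {c} = ⋃ k ∈ K, (D k ∩ T^[k] ⁻¹' (Ep (rk k)) ∩ P ⁻¹' {c}) := by
      rw [hB, Set.iUnion₂_inter]
    rw [hseteq]
    exact measure_biUnion_finset
      (fun a _ b _ hab => Disjoint.mono (inter_subset_left.trans inter_subset_left)
        (inter_subset_left.trans inter_subset_left) (hDdis a b hab))
      (fun k _ => (hCmeas k).inter (hP c))
  have hDsum : ∑ k ∈ K, μ (D k) ≤ 1 := by
    rw [← measure_biUnion_finset (fun a _ b _ hab => hDdis a b hab) (fun k _ => hDmeas k)]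
    exact prob_le_one
  have hKcard : K.card ≤ R + 1 := by
    rw [hK, Nat.card_Icc]
    omega
  -- upper bound for μ B
  have hμB_le : μ B ≤ 1 / ((N:ℝ≥0∞)+1) + d4 := by
    have hcard2 : K.card * Fintype.card C ≤ (R+1) * (Fintype.card C + 1) :=
      Nat.mul_le_mul hKcard (Nat.le_succ _)
    calc μ B = ∑ k ∈ K, μ (D k ∩ T^[k] ⁻¹' (Ep (rk k))) := hμBsum
      _ = ∑ k ∈ K, ∑ c, μ (D k ∩ T^[k] ⁻¹' (Ep (rk k)) ∩ P ⁻¹' {c}) :=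
          Finset.sum_congr rfl (fun k _ => measure_fiber_sum μ P hP (hCmeas k))
      _ ≤ ∑ k ∈ K, ∑ c : C, (μ (D k ∩ P ⁻¹' {c}) / ((N:ℝ≥0∞)+1) + eta) := by
          refine Finset.sum_le_sum fun k hk => Finset.sum_le_sum fun c _ => ?_
          rw [hρEp k hk c, hρE k hk c]
          exact (hEpbound ⟨⟨k, hkfin k hk⟩, c⟩ (rk k)).1
      _ = ∑ k ∈ K, (μ (D k) / ((N:ℝ≥0∞)+1) + (Fintype.card C : ℝ≥0∞) * eta) := by
          refine Finset.sum_congr rfl fun k hk => ?_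
          rw [Finset.sum_add_distrib, Finset.sum_const, Finset.card_univ, nsmul_eq_mul]
          congr 1
          rw [measure_fiber_sum μ P hP (hDmeas k)]
          simp only [div_eq_mul_inv]
          rw [Finset.sum_mul]
      _ = (∑ k ∈ K, μ (D k)) / ((N:ℝ≥0∞)+1) + (K.card : ℝ≥0∞) * ((Fintype.card C : ℝ≥0∞) * eta) := by
          rw [Finset.sum_add_distrib, Finset.sum_const, nsmul_eq_mul]
          congr 1
          simp only [div_eq_mul_inv]
          rw [Finset.sum_mul]
      _ ≤ 1 / ((N:ℝ≥0∞)+1) + d4 := by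
          refine add_le_add ?_ ?_
          · gcongr <;> exact hDsum
          · rw [← mul_assoc, ← Nat.cast_mul]
            exact hcount _ hcard2
  -- lower bound for μ (B ∩ P⁻¹ c)
  have hdist : ∀ c, μ (P ⁻¹' {c}) ≤
      ((N:ℝ≥0∞)+1) * μ (B ∩ P ⁻¹' {c}) + (((N:ℝ≥0∞)+1) * d4 + (d4 + d8)) := by
    intro c
    have hPsub : P ⁻¹' {c} ⊆ (⋃ k ∈ K, (D k ∩ P ⁻¹' {c})) ∪
        ((⋃ k ∈ Finset.Iio (N+1), W k) ∪ Vᶜ) := by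
      intro x hx
      by_cases hxV : x ∈ V
      · obtain ⟨k0, hk0R, hk0⟩ := Set.mem_iUnion₂.1 hxV
        have hex : ∃ k, x ∈ W k := ⟨k0, hk0⟩
        have hMR : Nat.find hex ≤ R := le_trans (Nat.find_min' hex hk0) (Finset.mem_Iic.1 hk0R)
        by_cases hM : N+1 ≤ Nat.find hex
        · refine Or.inl (mem_biUnion (Finset.mem_Icc.2 ⟨hM, hMR⟩) ⟨?_, hx⟩)
          refine ⟨Nat.find_spec hex, fun hmem => ?_⟩
          obtain ⟨l, hl, hxl⟩ := Set.mem_iUnion₂.1 hmem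
          exact (Nat.find_min hex hl) hxl
        · exact Or.inr (Or.inl (mem_biUnion (Finset.mem_Iio.2 (by omega)) (Nat.find_spec hex)))
      · exact Or.inr (Or.inr hxV)
    have hVc : μ Vᶜ ≤ d4 := by
      rw [measure_compl hVmeas (measure_ne_top μ V), measure_univ]
      rw [tsub_le_iff_right, add_comm]
      exact hVR
    have hterm : ∀ k (hk : k ∈ K), μ (D k ∩ P ⁻¹' {c}) ≤
        ((N:ℝ≥0∞)+1) * (μ (D k ∩ T^[k] ⁻¹' (Ep (rk k)) ∩ P ⁻¹' {c}) + eta) := by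
      intro k hk
      rw [hρE k hk c, hρEp k hk c]
      set q := ρ ⟨⟨k, hkfin k hk⟩, c⟩ E with hq
      have hb := (hEpbound ⟨⟨k, hkfin k hk⟩, c⟩ (rk k)).2
      calc q = q / ((N:ℝ≥0∞)+1) * ((N:ℝ≥0∞)+1) :=
            (ENNReal.div_mul_cancel (by simp) (ennreal_nat_ne_top N)).symm
        _ ≤ (ρ ⟨⟨k, hkfin k hk⟩, c⟩ (Ep (rk k)) + eta) * ((N:ℝ≥0∞)+1) :=
            mul_le_mul_left hb _
        _ = ((N:ℝ≥0∞)+1) * (ρ ⟨⟨k, hkfin k hk⟩, c⟩ (Ep (rk k)) + eta) := mul_comm _ _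
    calc μ (P ⁻¹' {c})
        ≤ μ (⋃ k ∈ K, (D k ∩ P ⁻¹' {c})) + μ ((⋃ k ∈ Finset.Iio (N+1), W k) ∪ Vᶜ) :=
          le_trans (measure_mono hPsub) (measure_union_le _ _)
      _ ≤ (∑ k ∈ K, μ (D k ∩ P ⁻¹' {c})) + (d8 + d4) := by
          refine add_le_add (measure_biUnion_finset_le _ _)
            (le_trans (measure_union_le _ _) (add_le_add hNμ hVc))
      _ ≤ (∑ k ∈ K, ((N:ℝ≥0∞)+1) * (μ (D k ∩ T^[k] ⁻¹' (Ep (rk k)) ∩ P ⁻¹' {c}) + eta))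
            + (d8 + d4) := by
          refine add_le_add_left (Finset.sum_le_sum fun k hk => hterm k hk) _
      _ = ((N:ℝ≥0∞)+1) * (μ (B ∩ P ⁻¹' {c}) + (K.card : ℝ≥0∞) * eta) + (d8 + d4) := by
          rw [← Finset.mul_sum, Finset.sum_add_distrib, Finset.sum_const, nsmul_eq_mul,
            hμBPsum c]
      _ ≤ ((N:ℝ≥0∞)+1) * (μ (B ∩ P ⁻¹' {c}) + d4) + (d8 + d4) := by
          gcongr
          refine hcount _ ?_
          calc K.card ≤ R + 1 := hKcard
            _ ≤ (R+1) * (Fintype.card C + 1) := Nat.le_mul_of_pos_right _ (by omega)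
      _ = ((N:ℝ≥0∞)+1) * μ (B ∩ P ⁻¹' {c}) + (((N:ℝ≥0∞)+1) * d4 + (d4 + d8)) := by
          ring
  -- putting everything together
  refine ⟨B, hBmeas, hdisj, hcovμ, fun c => ?_⟩
  have hdiv : μ (P ⁻¹' {c}) / ((N:ℝ≥0∞)+1) ≤ μ (B ∩ P ⁻¹' {c}) + (d4 + (d4 + d8)) := by
    calc μ (P ⁻¹' {c}) / ((N:ℝ≥0∞)+1)
        ≤ (((N:ℝ≥0∞)+1) * (μ (B ∩ P ⁻¹' {c}) + d4) + (d4 + d8)) / ((N:ℝ≥0∞)+1) := by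
          gcongr
          calc μ (P ⁻¹' {c}) ≤ ((N:ℝ≥0∞)+1) * μ (B ∩ P ⁻¹' {c})
                + (((N:ℝ≥0∞)+1) * d4 + (d4 + d8)) := hdist c
            _ = ((N:ℝ≥0∞)+1) * (μ (B ∩ P ⁻¹' {c}) + d4) + (d4 + d8) := by ring
      _ = (μ (B ∩ P ⁻¹' {c}) + d4) + (d4 + d8) / ((N:ℝ≥0∞)+1) := by
          rw [ENNReal.add_div, ennreal_nat_cancel]
      _ ≤ (μ (B ∩ P ⁻¹' {c}) + d4) + (d4 + d8) := by
          gcongr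
          exact ennreal_div_nat_le N _
      _ = μ (B ∩ P ⁻¹' {c}) + (d4 + (d4 + d8)) := by ring
  calc μ B * μ (P ⁻¹' {c}) ≤ (1 / ((N:ℝ≥0∞)+1) + d4) * μ (P ⁻¹' {c}) :=
        mul_le_mul_left hμB_le _
    _ = 1 / ((N:ℝ≥0∞)+1) * μ (P ⁻¹' {c}) + d4 * μ (P ⁻¹' {c}) := add_mul _ _ _
    _ ≤ μ (P ⁻¹' {c}) / ((N:ℝ≥0∞)+1) + d4 := by
        refine add_le_add ?_ ?_
        · rw [one_div, ← ENNReal.div_eq_inv_mul]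
        · calc d4 * μ (P ⁻¹' {c}) ≤ d4 * 1 := mul_le_mul_right prob_le_one _
            _ = d4 := mul_one _
    _ ≤ (μ (B ∩ P ⁻¹' {c}) + (d4 + (d4 + d8))) + d4 := add_le_add_left hdiv _
    _ ≤ μ (B ∩ P ⁻¹' {c}) + ENNReal.ofReal δ := by
        rw [add_assoc]
        refine add_le_add_right ?_ _
        rw [hd4, hd8, ← ENNReal.ofReal_add (by linarith) (by linarith),
          ← ENNReal.ofReal_add (by linarith) (by linarith),
          ← ENNReal.ofReal_add (by linarith) (by linarith)]
        exact ENNReal.ofReal_le_ofReal (by linarith)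

private lemma strongRokhlinFinal {X : Type} [MeasurableSpace X] [StandardBorelSpace X]
    (μ : Measure X) [IsProbabilityMeasure μ] [NullSingletonClass μ]
    (T : X → X) (hTm : Measurable T) (hTpres : MeasurePreserving T μ μ) (hErg : Ergodic T μ)
    {C : Type} [Fintype C] (P : X → C) (hP : ∀ c : C, MeasurableSet (P ⁻¹' {c}))
    (ε : ℝ) (hε : 0 < ε) (N : ℕ) :
    ∃ B : Set X, MeasurableSet B ∧
      (∀ i j : Fin (N + 1), i ≠ j →
        Disjoint ((T^[(i : ℕ)]) ⁻¹' B) ((T^[(j : ℕ)]) ⁻¹' B)) ∧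
      ENNReal.ofReal (1 - ε) < μ (⋃ j : Fin (N + 1), (T^[(j : ℕ)]) ⁻¹' B) ∧
      ∀ c : C, μ (P ⁻¹' {c} ∩ B) = μ (P ⁻¹' {c}) * μ B := by
  classical
  set e : ℝ≥0∞ := ENNReal.ofReal ε with he
  have hepos : 0 < e := ENNReal.ofReal_pos.2 hε
  have hetop : e ≠ ∞ := ENNReal.ofReal_ne_top
  -- the set of positive fibers
  set Cp : Finset C := Finset.univ.filter (fun c => 0 < μ (P ⁻¹' {c})) with hCp
  have hfibuniv : (1:ℝ≥0∞) = ∑ c, μ (P ⁻¹' {c}) := by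
    have := measure_fiber_sum μ P hP (MeasurableSet.univ (α := X))
    simpa [Set.univ_inter] using this
  have hCpsum : ∑ c ∈ Cp, μ (P ⁻¹' {c}) = 1 := by
    rw [hfibuniv]
    refine Finset.sum_subset (Finset.subset_univ _) fun c _ hc => ?_
    rw [hCp, Finset.mem_filter] at hc
    push_neg at hc
    have := hc (Finset.mem_univ c)
    exact le_antisymm (le_of_not_gt (by simpa using this)) (zero_le)
  have hCpne : Cp.Nonempty := by
    by_contra hne
    rw [Finset.not_nonempty_iff_eq_empty] at hne
    rw [hne, Finset.sum_empty] at hCpsum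
    exact one_ne_zero hCpsum.symm
  have hCpmem : ∀ c ∈ Cp, 0 < μ (P ⁻¹' {c}) := by
    intro c hc
    rw [hCp, Finset.mem_filter] at hc
    exact hc.2
  set p0 : ℝ≥0∞ := Cp.inf' hCpne (fun c => μ (P ⁻¹' {c})) with hp0
  have hp0pos : 0 < p0 := by
    rw [hp0, Finset.lt_inf'_iff]
    exact fun c hc => hCpmem c hc
  have hp0top : p0 ≠ ∞ := by
    obtain ⟨c, hc, hceq⟩ := Finset.exists_mem_eq_inf' hCpne (fun c => μ (P ⁻¹' {c}))
    rw [hp0, hceq]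
    exact measure_ne_top μ _
  -- the slack
  set q : ℝ≥0∞ := 1 + ((N:ℝ≥0∞)+1) / p0 with hq
  have hqpos : q ≠ 0 := by simp [hq]
  have hqtop : q ≠ ∞ := by
    rw [hq]
    refine ENNReal.add_ne_top.2 ⟨ENNReal.one_ne_top, ?_⟩
    exact (ENNReal.div_lt_top (by simp [ENNReal.add_eq_top, ENNReal.natCast_ne_top])
      hp0pos.ne').ne
  set d0 : ℝ≥0∞ := min e 1 / (2 * q) with hd0
  have h2q0 : (2:ℝ≥0∞) * q ≠ 0 := by
    simp [hqpos]
  have h2qtop : (2:ℝ≥0∞) * q ≠ ∞ := ENNReal.mul_ne_top (by norm_num) hqtop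
  have hd0pos : 0 < d0 := by
    rw [hd0]
    exact ENNReal.div_pos (lt_min hepos zero_lt_one).ne' h2qtop
  have hd0top : d0 ≠ ∞ := by
    rw [hd0]
    exact (ENNReal.div_lt_top (by simp [lt_of_le_of_lt (min_le_right e 1) ENNReal.one_lt_top]) h2q0).ne
  have hd0q : d0 * q = min e 1 / 2 := by
    rw [hd0, div_eq_mul_inv, ENNReal.mul_inv (Or.inl (by norm_num)) (Or.inl (by norm_num)),
      mul_assoc, mul_assoc, ENNReal.inv_mul_cancel hqpos hqtop, mul_one, ← div_eq_mul_inv]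
  set δ : ℝ := d0.toReal with hδ
  have hδpos : 0 < δ := ENNReal.toReal_pos hd0pos.ne' hd0top
  have hofδ : ENNReal.ofReal δ = d0 := ENNReal.ofReal_toReal hd0top
  obtain ⟨B₀, hB₀meas, hdisj, hcov, hind⟩ := approxTower μ T hTm hTpres hErg P hP N hδpos
  rw [hofδ] at hcov hind
  -- the normalizing constant t
  set t : ℝ≥0∞ := Cp.inf' hCpne (fun c => μ (B₀ ∩ P ⁻¹' {c}) / μ (P ⁻¹' {c})) with ht
  -- (a) some fiber is under-represented
  have hexc : ∃ c ∈ Cp, μ (B₀ ∩ P ⁻¹' {c}) ≤ μ B₀ * μ (P ⁻¹' {c}) := by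
    by_contra hcon
    push_neg at hcon
    have h0 : ∀ c, c ∉ Cp → μ (B₀ ∩ P ⁻¹' {c}) = 0 := by
      intro c hc
      have hc0 : μ (P ⁻¹' {c}) = 0 := by
        by_contra hne
        exact hc (Finset.mem_filter.2 ⟨Finset.mem_univ c, pos_iff_ne_zero.2 hne⟩)
      exact measure_mono_null inter_subset_right hc0
    have hsum1 : ∑ c ∈ Cp, μ (B₀ ∩ P ⁻¹' {c}) = μ B₀ :=
      (Finset.sum_subset (Finset.subset_univ _) (fun c _ hc => h0 c hc)).trans
        (measure_fiber_sum μ P hP hB₀meas).symm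
    have hsum2 : ∑ c ∈ Cp, μ B₀ * μ (P ⁻¹' {c}) = μ B₀ := by
      rw [← Finset.mul_sum, hCpsum, mul_one]
    have hlt : ∑ c ∈ Cp, (μ B₀ * μ (P ⁻¹' {c})).toReal
        < ∑ c ∈ Cp, (μ (B₀ ∩ P ⁻¹' {c})).toReal := by
      refine Finset.sum_lt_sum_of_nonempty hCpne fun c hc => ?_
      refine (ENNReal.toReal_lt_toReal ?_ ?_).2 (hcon c hc)
      · exact ENNReal.mul_ne_top (measure_ne_top _ _) (measure_ne_top _ _)
      · exact measure_ne_top _ _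
    have he1 : ∑ c ∈ Cp, (μ B₀ * μ (P ⁻¹' {c})).toReal = (μ B₀).toReal := by
      rw [← ENNReal.toReal_sum (fun c _ =>
        ENNReal.mul_ne_top (measure_ne_top _ _) (measure_ne_top _ _)), hsum2]
    have he2 : ∑ c ∈ Cp, (μ (B₀ ∩ P ⁻¹' {c})).toReal = (μ B₀).toReal := by
      rw [← ENNReal.toReal_sum (fun c _ => measure_ne_top _ _), hsum1]
    rw [he1, he2] at hlt
    exact lt_irrefl _ hlt
  obtain ⟨c₀, hc₀Cp, hc₀⟩ := hexc
  have htle : t ≤ μ B₀ := by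
    refine le_trans (Finset.inf'_le _ hc₀Cp) ?_
    rw [ENNReal.div_le_iff (hCpmem c₀ hc₀Cp).ne' (measure_ne_top μ _)]
    exact hc₀
  have httop : t ≠ ∞ := (lt_of_le_of_lt htle (measure_lt_top μ B₀)).ne
  have htmul : ∀ c ∈ Cp, t * μ (P ⁻¹' {c}) ≤ μ (B₀ ∩ P ⁻¹' {c}) := by
    intro c hc
    have h1 : t ≤ μ (B₀ ∩ P ⁻¹' {c}) / μ (P ⁻¹' {c}) := Finset.inf'_le _ hc
    calc t * μ (P ⁻¹' {c}) ≤ (μ (B₀ ∩ P ⁻¹' {c}) / μ (P ⁻¹' {c})) * μ (P ⁻¹' {c}) :=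
          mul_le_mul_left h1 _
      _ = μ (B₀ ∩ P ⁻¹' {c}) :=
          ENNReal.div_mul_cancel (hCpmem c hc).ne' (measure_ne_top μ _)
  have hμB₀le : μ B₀ ≤ t + d0 / p0 := by
    obtain ⟨c, hc, hceq⟩ := Finset.exists_mem_eq_inf' hCpne
      (fun c => μ (B₀ ∩ P ⁻¹' {c}) / μ (P ⁻¹' {c}))
    rw [ht, hceq]
    have hPc0 : μ (P ⁻¹' {c}) ≠ 0 := (hCpmem c hc).ne'
    have hPctop : μ (P ⁻¹' {c}) ≠ ∞ := measure_ne_top μ _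
    have h2 : μ B₀ = (μ B₀ * μ (P ⁻¹' {c})) / μ (P ⁻¹' {c}) := by
      rw [mul_div_assoc, ENNReal.div_self hPc0 hPctop, mul_one]
    rw [h2]
    calc (μ B₀ * μ (P ⁻¹' {c})) / μ (P ⁻¹' {c})
        ≤ (μ (B₀ ∩ P ⁻¹' {c}) + d0) / μ (P ⁻¹' {c}) := by
          gcongr
          exact hind c
      _ = μ (B₀ ∩ P ⁻¹' {c}) / μ (P ⁻¹' {c}) + d0 / μ (P ⁻¹' {c}) := ENNReal.add_div
      _ ≤ μ (B₀ ∩ P ⁻¹' {c}) / μ (P ⁻¹' {c}) + d0 / p0 := by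
          gcongr
          exact Finset.inf'_le _ hc
  -- choose the exact pieces
  have hchoose : ∀ c : C, ∃ A : Set X, A ⊆ B₀ ∩ P ⁻¹' {c} ∧ MeasurableSet A ∧
      μ A = (if c ∈ Cp then t * μ (P ⁻¹' {c}) else 0) := by
    intro c
    by_cases hc : c ∈ Cp
    · simp only [hc, if_true]
      exact sierpinski μ (hB₀meas.inter (hP c)) (htmul c hc)
    · simp only [hc, if_false]
      exact ⟨∅, empty_subset _, MeasurableSet.empty, measure_empty⟩
  choose Bc hBcsub hBcmeas hBcμ using hchoose
  set B : Set X := ⋃ c, Bc c with hB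
  have hBmeas : MeasurableSet B := MeasurableSet.iUnion hBcmeas
  have hBsubB₀ : B ⊆ B₀ := iUnion_subset fun c => (hBcsub c).trans inter_subset_left
  have hBPc : ∀ c, B ∩ P ⁻¹' {c} = Bc c := by
    intro c
    apply Subset.antisymm
    · rintro x ⟨hxB, hxP⟩
      obtain ⟨c', hc'⟩ := mem_iUnion.1 hxB
      have h1 : P x = c' := (hBcsub c' hc').2
      have h2 : P x = c := hxP
      have hcc : c' = c := h1.symm.trans h2
      rwa [hcc] at hc'
    · intro x hx
      exact ⟨mem_iUnion.2 ⟨c, hx⟩, (hBcsub c hx).2⟩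
  have hμB : μ B = t := by
    have hdisjBc : Pairwise (Function.onFun Disjoint Bc) := by
      intro a b hab
      rw [Function.onFun, Set.disjoint_left]
      intro x hxa hxb
      exact hab (((hBcsub a hxa).2).symm.trans ((hBcsub b hxb).2))
    rw [hB, measure_iUnion hdisjBc hBcmeas, tsum_fintype]
    calc ∑ c, μ (Bc c) = ∑ c ∈ Cp, μ (Bc c) :=
          (Finset.sum_subset (Finset.subset_univ _) fun c _ hc => by
            rw [hBcμ c, if_neg hc]).symm
      _ = ∑ c ∈ Cp, t * μ (P ⁻¹' {c}) :=
          Finset.sum_congr rfl fun c hc => by rw [hBcμ c, if_pos hc]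
      _ = t := by rw [← Finset.mul_sum, hCpsum, mul_one]
  refine ⟨B, hBmeas, ?_, ?_, ?_⟩
  · intro i j hij
    rcases Nat.lt_or_ge (i:ℕ) (j:ℕ) with h | h
    · exact (hdisj i j h (Nat.lt_succ_iff.1 j.isLt)).mono
        (preimage_mono hBsubB₀) (preimage_mono hBsubB₀)
    · have h' : (j:ℕ) < (i:ℕ) := by
        rcases Nat.lt_or_ge (j:ℕ) (i:ℕ) with h' | h'
        · exact h'
        · exact absurd (Fin.ext (le_antisymm h' h)) hij
      exact ((hdisj j i h' (Nat.lt_succ_iff.1 i.isLt)).mono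
        (preimage_mono hBsubB₀) (preimage_mono hBsubB₀)).symm
  · -- coverage
    have hBd : μ (B₀ \ B) ≤ d0 / p0 := by
      rw [measure_diff hBsubB₀ hBmeas.nullMeasurableSet (measure_ne_top μ B), hμB]
      exact tsub_le_iff_right.2 (by rw [add_comm]; exact hμB₀le)
    have hcup : μ (⋃ j : Fin (N+1), T^[(j:ℕ)] ⁻¹' B₀)
        ≤ μ (⋃ j : Fin (N+1), T^[(j:ℕ)] ⁻¹' B) + ((N:ℝ≥0∞)+1) * (d0/p0) := by
      have hsubU : (⋃ j : Fin (N+1), T^[(j:ℕ)] ⁻¹' B₀) ⊆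
          (⋃ j : Fin (N+1), T^[(j:ℕ)] ⁻¹' B) ∪
          (⋃ j : Fin (N+1), T^[(j:ℕ)] ⁻¹' (B₀ \ B)) := by
        intro x hx
        obtain ⟨j, hj⟩ := mem_iUnion.1 hx
        by_cases hxB : T^[(j:ℕ)] x ∈ B
        · exact Or.inl (mem_iUnion.2 ⟨j, hxB⟩)
        · exact Or.inr (mem_iUnion.2 ⟨j, ⟨hj, hxB⟩⟩)
      have hstep : μ (⋃ j : Fin (N+1), T^[(j:ℕ)] ⁻¹' (B₀ \ B)) ≤ ((N:ℝ≥0∞)+1) * (d0/p0) := by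
        calc μ (⋃ j : Fin (N+1), T^[(j:ℕ)] ⁻¹' (B₀ \ B))
            ≤ ∑ j : Fin (N+1), μ (T^[(j:ℕ)] ⁻¹' (B₀ \ B)) := measure_iUnion_fintype_le _ _
          _ = ∑ _j : Fin (N+1), μ (B₀ \ B) := Finset.sum_congr rfl fun j _ =>
              (hTpres.iterate (j:ℕ)).measure_preimage
                ((hB₀meas.diff hBmeas).nullMeasurableSet)
          _ = ((N:ℝ≥0∞)+1) * μ (B₀ \ B) := by
              rw [Finset.sum_const, Finset.card_univ, Fintype.card_fin, nsmul_eq_mul]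
              push_cast
              ring
          _ ≤ ((N:ℝ≥0∞)+1) * (d0/p0) := mul_le_mul_right hBd _
      calc μ (⋃ j : Fin (N+1), T^[(j:ℕ)] ⁻¹' B₀)
          ≤ μ (⋃ j : Fin (N+1), T^[(j:ℕ)] ⁻¹' B)
            + μ (⋃ j : Fin (N+1), T^[(j:ℕ)] ⁻¹' (B₀ \ B)) :=
            le_trans (measure_mono hsubU) (measure_union_le _ _)
        _ ≤ μ (⋃ j : Fin (N+1), T^[(j:ℕ)] ⁻¹' B) + ((N:ℝ≥0∞)+1) * (d0/p0) :=
            add_le_add_right hstep _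
    have hfinal1 : (1:ℝ≥0∞) ≤ μ (⋃ j : Fin (N+1), T^[(j:ℕ)] ⁻¹' B) + min e 1 / 2 := by
      have hdq : ((N:ℝ≥0∞)+1) * (d0/p0) + d0 = d0 * q := by
        have h1 : ((N:ℝ≥0∞)+1) * (d0/p0) = d0 * (((N:ℝ≥0∞)+1)/p0) := by
          simp only [div_eq_mul_inv]
          ring
        rw [hq, mul_add, mul_one, h1, add_comm]
      calc (1:ℝ≥0∞) ≤ μ (⋃ j : Fin (N+1), T^[(j:ℕ)] ⁻¹' B₀) + d0 := hcov
        _ ≤ (μ (⋃ j : Fin (N+1), T^[(j:ℕ)] ⁻¹' B) + ((N:ℝ≥0∞)+1) * (d0/p0)) + d0 :=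
            add_le_add_left hcup _
        _ = μ (⋃ j : Fin (N+1), T^[(j:ℕ)] ⁻¹' B) + (((N:ℝ≥0∞)+1) * (d0/p0) + d0) := by
            rw [add_assoc]
        _ = μ (⋃ j : Fin (N+1), T^[(j:ℕ)] ⁻¹' B) + d0 * q := by rw [hdq]
        _ = μ (⋃ j : Fin (N+1), T^[(j:ℕ)] ⁻¹' B) + min e 1 / 2 := by rw [hd0q]
    rcases le_or_gt 1 ε with h1 | h1
    · have hz : ENNReal.ofReal (1 - ε) = 0 := ENNReal.ofReal_eq_zero.2 (by linarith)
      rw [hz]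
      refine pos_iff_ne_zero.2 fun h0 => ?_
      rw [h0, zero_add] at hfinal1
      have hhalf : min e 1 / 2 ≤ 1/2 := by
        gcongr
        exact min_le_right _ _
      have h12 := le_trans hfinal1 hhalf
      have : (1:ℝ≥0∞)/2 < 1 := ENNReal.half_lt_self one_ne_zero ENNReal.one_ne_top
      exact absurd h12 (not_le.2 this)
    · have hee : e ≤ 1 := by rw [he]; exact ENNReal.ofReal_le_one.2 h1.le
      have hofsub : ENNReal.ofReal (1 - ε) = 1 - e := by
        rw [he, ← ENNReal.ofReal_one, ← ENNReal.ofReal_sub _ hε.le]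
      rw [hofsub]
      by_contra hcon2
      push_neg at hcon2
      have hmine : min e 1 = e := min_eq_left hee
      rw [hmine] at hfinal1
      have hlt2 : (1 - e) + e/2 < 1 := by
        calc (1 - e) + e/2 < (1 - e) + e :=
              ENNReal.add_lt_add_left (by
                exact ne_top_of_le_ne_top ENNReal.one_ne_top tsub_le_self)
                (ENNReal.half_lt_self hepos.ne' hetop)
          _ = 1 := tsub_add_cancel_of_le hee
      exact absurd (le_trans hfinal1 (add_le_add_left hcon2 _)) (not_le.2 hlt2)
  · intro c
    rw [Set.inter_comm, hBPc c, hBcμ c]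
    by_cases hc : c ∈ Cp
    · rw [if_pos hc, hμB, mul_comm]
    · rw [if_neg hc]
      have h0 : μ (P ⁻¹' {c}) = 0 := by
        by_contra hne
        exact hc (Finset.mem_filter.2 ⟨Finset.mem_univ c, pos_iff_ne_zero.2 hne⟩)
      rw [h0, zero_mul]

end StrongRokhlinAux

/-- **Proposition 2.3.3 (Strong Tree Rokhlin Lemma).** Let `X = (X,𝓑,μ,T)` be an ergodic
`p`-endomorphism and `P : X → C` a finite measurable partition.  Then for each `ε > 0` and
`N ∈ ℕ` there exists an `ε`-tree Rokhlin tower of height `N+1` in `X` whose base `B` is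
independent of `P`, i.e. `dist(P|B) = dist(P)`. -/
theorem strong_tree_rokhlin_lemma
    {s : ℕ} (p : Fin s → ℝ) (hp : IsProbVec p)
    {X : Type} [MeasurableSpace X] [StandardBorelSpace X]
    (μ : Measure X) [IsProbabilityMeasure μ] [NullSingletonClass μ]
    (T : X → X) (hX : IsPEndo p μ T) (hErg : Ergodic T μ)
    {C : Type} [Fintype C] (P : X → C) (hP : ∀ c : C, MeasurableSet (P ⁻¹' {c}))
    (ε : ℝ) (hε : 0 < ε) (N : ℕ) :
    ∃ B : Set X, MeasurableSet B ∧
      (∀ i j : Fin (N + 1), i ≠ j →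
        Disjoint ((T^[(i : ℕ)]) ⁻¹' B) ((T^[(j : ℕ)]) ⁻¹' B)) ∧
      ENNReal.ofReal (1 - ε) < μ (⋃ j : Fin (N + 1), (T^[(j : ℕ)]) ⁻¹' B) ∧
      ∀ c : C, μ (P ⁻¹' {c} ∩ B) = μ (P ⁻¹' {c}) * μ B := by
  obtain ⟨hTm, hTpres, -, -⟩ := hX
  exact strongRokhlinFinal μ T hTm hTpres hErg P hP ε hε N

end
end
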